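/- arXiv:1908.11539 — 8 statements merged into one kernel-verified Lean document; each statement's English description precedes it below -/
import Mathlib

section
/- Under setup (S), if v > 0, then for every real t the moment generating function of the normalized variable converges to that of the standard normal: lim_{n→∞} E[exp(t·(X_n − e·n)/√(v·n))] = lim_{n→∞} P_n(e^{t/√(v·n)}) · e^{−t·e·n/√(v·n)} / P_n(1) = e^{t²/2}. -/
open Polynomial Filter Set MeasureTheory

/-- Sum of the coefficients `p i` of `P` over indices `0 ≤ i ≤ y`. -/
noncomputable def cdfSum (P : Polynomial ℝ) (y : ℝ) : ℝ :=
  ∑ i ∈ P.support, if (i : ℝ) ≤ y then P.coeff i else 0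

/-- The standard normal cumulative distribution function. -/
noncomputable def stdNormalCDF (x : ℝ) : ℝ :=
  (Real.sqrt (2 * Real.pi))⁻¹ * ∫ u in Set.Iic x, Real.exp (-u ^ 2 / 2)

/-!
With `g s = log λ(eˢ)` and `s = t / √(v n)`, the normalized moment generating function is
`ρₙ · exp (n (g s - g 0 - e s))` where `ρₙ = (Pₙ(eˢ) / λ(eˢ)ⁿ) / (Pₙ(1) / λ(1)ⁿ)` tends to
`a(1) / a(1) = 1` by the uniform convergence. Since `g' 0 = e` and `g'' 0 = v`, the exponent is
`n (v s² / 2 + o(s²)) → t² / 2`.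
-/

open scoped Topology
open Real

theorem ContDiffOn.differentiableAt_deriv {f : ℝ → ℝ} {s : Set ℝ} {x : ℝ}
    (hf : ContDiffOn ℝ 2 f s) (hs : IsOpen s) (hx : x ∈ s) : DifferentiableAt ℝ (deriv f) x :=
  ((hf.deriv_of_isOpen hs (m := 1) (by norm_num)).differentiableOn one_ne_zero).differentiableAt
    (hs.mem_nhds hx)

theorem tendsto_sub_sub_div_sq_of_hasDerivAt {g ψ : ℝ → ℝ} {a c : ℝ}
    (hg : ∀ᶠ x in 𝓝 a, HasDerivAt g (ψ x) x) (hψ : HasDerivAt ψ c a) :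
    Tendsto (fun x => (g x - g a - ψ a * (x - a)) / (x - a) ^ 2) (𝓝[≠] a) (𝓝 (c / 2)) := by
  refine HasDerivAt.lhopital_zero_nhdsNE (f' := fun x => ψ x - ψ a)
    (g' := fun x => 2 * (x - a)) ?_ ?_ ?_ ?_ ?_ ?_
  · filter_upwards [nhdsWithin_le_nhds hg] with x hx
    exact ((hx.sub_const (g a)).sub
      (((hasDerivAt_id x).sub_const a).const_mul (ψ a))).congr_deriv (by ring)
  · filter_upwards with x
    exact (((hasDerivAt_id' x).sub_const a).pow 2).congr_deriv (by ring)
  · filter_upwards [self_mem_nhdsWithin] with x hx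
    exact mul_ne_zero two_ne_zero (sub_ne_zero.2 hx)
  · have hga : ContinuousAt g a := hg.self_of_nhds.continuousAt
    have : ContinuousAt (fun x => g x - g a - ψ a * (x - a)) a := by fun_prop
    simpa using this.tendsto.mono_left nhdsWithin_le_nhds
  · have : ContinuousAt (fun x : ℝ => (x - a) ^ 2) a := by fun_prop
    simpa using this.tendsto.mono_left nhdsWithin_le_nhds
  · refine ((hasDerivAt_iff_tendsto_slope.1 hψ).div_const 2).congr fun x => ?_
    rw [slope_def_field, div_div, mul_comm]

theorem tendsto_mul_comp_of_tendsto_div_sq {α : Type*} {l : Filter α} {R : ℝ → ℝ} {c L : ℝ}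
    {u w : α → ℝ} (hR0 : R 0 = 0) (hR : Tendsto (fun x => R x / x ^ 2) (𝓝[≠] 0) (𝓝 c))
    (hu : Tendsto u l (𝓝 0)) (hw : Tendsto (fun n => w n * u n ^ 2) l (𝓝 L)) :
    Tendsto (fun n => w n * R (u n)) l (𝓝 (c * L)) := by
  classical
  set ρ := Function.update (fun x => R x / x ^ 2) 0 c
  have hρ : Tendsto (fun n => ρ (u n)) l (𝓝 c) := by
    have := (continuousAt_update_same.2 hR).tendsto.comp hu
    rwa [Function.update_self] at this
  refine (hρ.mul hw).congr fun n => ?_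
  by_cases h : u n = 0
  · simp [h, hR0]
  · simp only [ρ, Function.update_of_ne h]
    field_simp

theorem hasDerivAt_log_comp_exp {lam : ℝ → ℝ} {s : ℝ} (hd : DifferentiableAt ℝ lam (exp s))
    (h0 : lam (exp s) ≠ 0) :
    HasDerivAt (fun s => log (lam (exp s))) (deriv lam (exp s) * exp s / lam (exp s)) s :=
  (hd.hasDerivAt.comp s (hasDerivAt_exp s)).log h0

theorem hasDerivAt_logDeriv_comp_exp_zero {lam : ℝ → ℝ} (hd : DifferentiableAt ℝ lam 1)
    (hd' : DifferentiableAt ℝ (deriv lam) 1) (h0 : lam 1 ≠ 0) :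
    HasDerivAt (fun s => deriv lam (exp s) * exp s / lam (exp s))
      ((-(deriv lam 1) ^ 2 + lam 1 * deriv (deriv lam) 1 + lam 1 * deriv lam 1) / lam 1 ^ 2)
      0 := by
  have hexp : HasDerivAt exp 1 0 := by simpa using hasDerivAt_exp 0
  have hA := hd'.hasDerivAt.comp_of_eq 0 hexp exp_zero.symm
  have hB := hd.hasDerivAt.comp_of_eq 0 hexp exp_zero.symm
  refine ((hA.mul hexp).div hB (by simpa using h0)).congr_deriv ?_
  simp only [Function.comp_def, Pi.mul_apply, exp_zero]
  field_simp
  ring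

theorem tendsto_log_comp_exp_remainder {lam : ℝ → ℝ}
    (hd : ∀ᶠ x in 𝓝 1, DifferentiableAt ℝ lam x) (hd' : DifferentiableAt ℝ (deriv lam) 1)
    (h1 : 0 < lam 1) :
    Tendsto (fun u => (log (lam (exp u)) - log (lam 1) - deriv lam 1 / lam 1 * u) / u ^ 2)
      (𝓝[≠] 0)
      (𝓝 ((-(deriv lam 1) ^ 2 + lam 1 * deriv (deriv lam) 1 + lam 1 * deriv lam 1) /
        lam 1 ^ 2 / 2)) := by
  have hpos : ∀ᶠ x in 𝓝 1, 0 < lam x :=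
    hd.self_of_nhds.continuousAt.eventually (lt_mem_nhds h1)
  have hexp : Tendsto exp (𝓝 0) (𝓝 1) := by simpa using continuous_exp.tendsto 0
  have hg : ∀ᶠ s in 𝓝 0, HasDerivAt (fun s => log (lam (exp s)))
      (deriv lam (exp s) * exp s / lam (exp s)) s := by
    filter_upwards [hexp.eventually (hd.and hpos)] with s hs
    exact hasDerivAt_log_comp_exp hs.1 hs.2.ne'
  simpa using tendsto_sub_sub_div_sq_of_hasDerivAt hg
    (hasDerivAt_logDeriv_comp_exp_zero hd.self_of_nhds hd' h1.ne')

theorem tendsto_div_sqrt_mul_natCast {v : ℝ} (hv : 0 < v) (t : ℝ) :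
    Tendsto (fun n : ℕ => t / √(v * n)) atTop (𝓝 0) :=
  tendsto_const_nhds.div_atTop
    (tendsto_sqrt_atTop.comp (tendsto_natCast_atTop_atTop.const_mul_atTop hv))

theorem tendsto_natCast_mul_comp_div_sqrt {R : ℝ → ℝ} {v : ℝ} (hv : 0 < v) (hR0 : R 0 = 0)
    (hR : Tendsto (fun x => R x / x ^ 2) (𝓝[≠] 0) (𝓝 (v / 2))) (t : ℝ) :
    Tendsto (fun n : ℕ => n * R (t / √(v * n))) atTop (𝓝 (t ^ 2 / 2)) := by
  have hscale : Tendsto (fun n : ℕ => n * (t / √(v * n)) ^ 2) atTop (𝓝 (t ^ 2 / v)) := by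
    refine tendsto_const_nhds.congr' ?_
    filter_upwards [eventually_ge_atTop 1] with n hn
    have : (0 : ℝ) < n := by exact_mod_cast hn
    rw [div_pow, sq_sqrt (by positivity)]
    field_simp
  convert tendsto_mul_comp_of_tendsto_div_sq hR0 hR (tendsto_div_sqrt_mul_natCast hv t) hscale
    using 2
  field_simp

theorem mul_exp_neg_div_eq_div_div_mul_exp {p q l D e u : ℝ} (n : ℕ) (hl : 0 < l)
    (hD : 0 < D) :
    p * exp (-(n * (e * u))) / q =
      p / l ^ n / (q / D ^ n) * exp (n * (log l - log D - e * u)) := by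
  rw [mul_sub, mul_sub, exp_sub, exp_sub, exp_nat_mul, exp_nat_mul, exp_log hl, exp_log hD,
    exp_neg]
  have := pow_pos hl n
  have := pow_pos hD n
  field_simp

theorem embedding_clt_mgf_convergence_general
    (P : ℕ → Polynomial ℝ)
    (δ : ℝ) (hδ : 0 < δ) (lam : ℝ → ℝ)
    (hlamC2 : ContDiffOn ℝ 2 lam (Set.Ioo (1 - δ) (1 + δ)))
    (D : ℝ) (hD : D = lam 1) (hDpos : 0 < D)
    (a : ℝ → ℝ)
    (hunif : TendstoUniformlyOn (fun n x => (P n).eval x / lam x ^ n) a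
      Filter.atTop (Set.Ioo (1 - δ) (1 + δ)))
    (ha1 : ContinuousAt a 1) (hapos : 0 < a 1)
    (e v : ℝ) (he : e = deriv lam 1 / D)
    (hv : v = (-(deriv lam 1) ^ 2 + D * deriv (deriv lam) 1 + D * deriv lam 1) / D ^ 2)
    (hvpos : 0 < v) :
    ∀ t : ℝ, Filter.Tendsto (fun n : ℕ =>
      (P n).eval (Real.exp (t / Real.sqrt (v * n))) *
        Real.exp (-(t * (e * n)) / Real.sqrt (v * n)) / (P n).eval 1)
      Filter.atTop (nhds (Real.exp (t ^ 2 / 2))) := by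
  intro t
  subst hD
  have hS : Ioo (1 - δ) (1 + δ) ∈ 𝓝 (1 : ℝ) := Ioo_mem_nhds (by linarith) (by linarith)
  have hd : ∀ᶠ x in 𝓝 1, DifferentiableAt ℝ lam x :=
    eventually_of_mem hS fun x hx =>
      (hlamC2.contDiffAt (isOpen_Ioo.mem_nhds hx)).differentiableAt (by norm_num)
  have hrem := tendsto_log_comp_exp_remainder hd
    (hlamC2.differentiableAt_deriv isOpen_Ioo (mem_of_mem_nhds hS)) hDpos
  rw [← he, ← hv] at hrem
  have hexponent := tendsto_natCast_mul_comp_div_sqrt hvpos (by simp) hrem t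
  have hx : Tendsto (fun n : ℕ => exp (t / √(v * n))) atTop (𝓝 1) := by
    simpa [Function.comp_def] using
      (continuous_exp.tendsto 0).comp (tendsto_div_sqrt_mul_natCast hvpos t)
  have hratio := (hunif.tendsto_comp ha1.continuousWithinAt
      (tendsto_nhdsWithin_iff.2 ⟨hx, hx.eventually hS⟩)).div
    (hunif.tendsto_comp ha1.continuousWithinAt
      (tendsto_nhdsWithin_iff.2 ⟨tendsto_const_nhds, .of_forall fun _ => mem_of_mem_nhds hS⟩))
    hapos.ne'
  have hlim := hratio.mul ((continuous_exp.tendsto _).comp hexponent)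
  rw [div_self hapos.ne', one_mul] at hlim
  refine hlim.congr' ?_
  filter_upwards [hx.eventually (hd.self_of_nhds.continuousAt.eventually (lt_mem_nhds hDpos))]
    with n hln
  rw [show -(t * (e * n)) / √(v * n) = -(n * (e * (t / √(v * n)))) by ring,
    mul_exp_neg_div_eq_div_div_mul_exp n hln hDpos]
  rfl

theorem embedding_clt_mgf_convergence
    (k : ℕ) (hk : 1 ≤ k)
    (P : ℕ → Polynomial ℝ) (b : ℕ → Polynomial ℝ)
    (hPcoeff : ∀ n i, ∃ m : ℕ, (P n).coeff i = (m : ℝ))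
    (hPpos : ∀ n, 1 ≤ n → 0 < (P n).eval 1)
    (hbint : ∀ j i, ∃ m : ℤ, (b j).coeff i = (m : ℝ))
    (hrec : ∀ n, k < n → ∀ x : ℝ,
      (P n).eval x = ∑ j ∈ Finset.range k, (b (j + 1)).eval x * (P (n - (j + 1))).eval x)
    (F : ℝ → ℝ → ℝ)
    (hF : ∀ x l : ℝ,
      F x l = l ^ k - ∑ j ∈ Finset.range k, (b (j + 1)).eval x * l ^ (k - (j + 1)))
    (δ : ℝ) (hδ : 0 < δ) (lam : ℝ → ℝ)
    (hlamC2 : ContDiffOn ℝ 2 lam (Set.Ioo (1 - δ) (1 + δ)))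
    (hlamroot : ∀ x ∈ Set.Ioo (1 - δ) (1 + δ), F x (lam x) = 0)
    (D : ℝ) (hD : D = lam 1) (hDpos : 0 < D)
    (Q : Polynomial ℂ)
    (hQ : Q = X ^ k -
      ∑ j ∈ Finset.range k, Polynomial.C (((b (j + 1)).eval 1 : ℝ) : ℂ) * X ^ (k - (j + 1)))
    (hmult : Q.rootMultiplicity (D : ℂ) = 1)
    (hdom : ∀ μ : ℂ, Q.eval μ = 0 → μ ≠ (D : ℂ) → ‖μ‖ < D)
    (a : ℝ → ℝ)
    (hunif : TendstoUniformlyOn (fun n x => (P n).eval x / lam x ^ n) a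
      Filter.atTop (Set.Ioo (1 - δ) (1 + δ)))
    (ha1 : ContinuousAt a 1) (hapos : 0 < a 1)
    (e v : ℝ) (he : e = deriv lam 1 / D)
    (hv : v = (-(deriv lam 1) ^ 2 + D * deriv (deriv lam) 1 + D * deriv lam 1) / D ^ 2)
    (hvpos : 0 < v) :
    ∀ t : ℝ, Filter.Tendsto (fun n : ℕ =>
      (P n).eval (Real.exp (t / Real.sqrt (v * n))) *
        Real.exp (-(t * (e * n)) / Real.sqrt (v * n)) / (P n).eval 1)
      Filter.atTop (nhds (Real.exp (t ^ 2 / 2))) :=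
  embedding_clt_mgf_convergence_general P δ hδ lam hlamC2 D hD hDpos a hunif ha1 hapos e v he hv
    hvpos
end

section
/- Under setup (S), the case v < 0 is impossible; that is, necessarily v ≥ 0. -/
open Polynomial Filter Set MeasureTheory

open scoped Topology

/-!
With `ψ(t) = log λ₁(eᵗ)` one has `ψ''(0) = v`, so it suffices that `ψ` is midpoint convex near
`0`. Near `x = 1` the hypotheses give `P_n(x) ~ a(x) λ₁(x)ⁿ` with `a(x) > 0`, hence
`ψ(t) = lim log P_n(eᵗ) / n`, and each `t ↦ log P_n(eᵗ)` is midpoint convex: for a polynomial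
with nonnegative coefficients, Cauchy–Schwarz gives `P(eᵗ)² ≤ P(e^{t+h}) P(e^{t-h})`.
-/

namespace Polynomial

theorem eval_pos_of_coeff_nonneg {p : ℝ[X]} (hc : ∀ i, 0 ≤ p.coeff i) (hp : p ≠ 0) {x : ℝ}
    (hx : 0 < x) : 0 < p.eval x := by
  rw [eval_eq_sum, sum_def]
  exact Finset.sum_pos (fun i hi => mul_pos ((hc i).lt_of_ne (mem_support_iff.1 hi).symm)
    (pow_pos hx i)) (support_nonempty.2 hp)

theorem eval_exp_sq_le {p : ℝ[X]} (hc : ∀ i, 0 ≤ p.coeff i) (x h : ℝ) :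
    p.eval (Real.exp x) ^ 2 ≤ p.eval (Real.exp (x + h)) * p.eval (Real.exp (x - h)) := by
  simp only [eval_eq_sum_range]
  refine Finset.sum_sq_le_sum_mul_sum_of_sq_le_mul _
    (fun i _ => mul_nonneg (hc i) (pow_nonneg (Real.exp_pos _).le i))
    (fun i _ => mul_nonneg (hc i) (pow_nonneg (Real.exp_pos _).le i)) (fun i _ => le_of_eq ?_)
  rw [← Real.exp_nat_mul, ← Real.exp_nat_mul, ← Real.exp_nat_mul]
  have : Real.exp (i * x) ^ 2 = Real.exp (i * (x + h)) * Real.exp (i * (x - h)) := by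
    rw [← Real.exp_add, sq, ← Real.exp_add]; ring_nf
  linear_combination p.coeff i ^ 2 * this

theorem two_mul_log_eval_exp_le {p : ℝ[X]} (hc : ∀ i, 0 ≤ p.coeff i) (x h : ℝ) :
    2 * Real.log (p.eval (Real.exp x)) ≤
      Real.log (p.eval (Real.exp (x + h))) + Real.log (p.eval (Real.exp (x - h))) := by
  rcases eq_or_ne p 0 with rfl | hp
  · simp
  have hpos y : 0 < p.eval (Real.exp y) := eval_pos_of_coeff_nonneg hc hp (Real.exp_pos y)
  have := Real.log_le_log (pow_pos (hpos x) 2) (eval_exp_sq_le hc x h)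
  rw [Real.log_pow, Real.log_mul (hpos _).ne' (hpos _).ne'] at this
  exact_mod_cast this

end Polynomial

theorem tendsto_log_div_natCast_of_tendsto_div_pow {u : ℕ → ℝ} {c A : ℝ} (hc : 0 < c)
    (hA : 0 < A) (hu : Tendsto (fun n => u n / c ^ n) atTop (𝓝 A)) :
    Tendsto (fun n : ℕ => Real.log (u n) / n) atTop (𝓝 (Real.log c)) := by
  have hlog : Tendsto (fun n : ℕ => Real.log (u n / c ^ n) / n + Real.log c) atTop
      (𝓝 (0 + Real.log c)) :=
    (((Real.continuousAt_log hA.ne').tendsto.comp hu).div_atTop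
      tendsto_natCast_atTop_atTop).add_const _
  rw [zero_add] at hlog
  refine hlog.congr' ?_
  filter_upwards [hu.eventually (eventually_gt_nhds hA), eventually_ne_atTop 0] with n hpos hn
  have hun : u n ≠ 0 := fun h => by simp [h] at hpos
  rw [Real.log_div hun (pow_ne_zero n hc.ne'), Real.log_pow]
  field_simp
  ring

theorem eventually_two_mul_le_of_tendsto {f : ℕ → ℝ → ℝ} {g : ℝ → ℝ} {x : ℝ}
    (hf : ∀ n h, 2 * f n x ≤ f n (x + h) + f n (x - h))
    (hlim : ∀ᶠ y in 𝓝 x, Tendsto (fun n => f n y) atTop (𝓝 (g y))) :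
    ∀ᶠ h in 𝓝 0, 2 * g x ≤ g (x + h) + g (x - h) := by
  have hadd : Tendsto (fun h : ℝ => x + h) (𝓝 0) (𝓝 x) := by
    simpa using tendsto_const_nhds.add (tendsto_id (x := 𝓝 (0 : ℝ)))
  have hsub : Tendsto (fun h : ℝ => x - h) (𝓝 0) (𝓝 x) := by
    simpa using tendsto_const_nhds.sub (tendsto_id (x := 𝓝 (0 : ℝ)))
  filter_upwards [hadd.eventually hlim, hsub.eventually hlim] with h hplus hminus
  exact le_of_tendsto_of_tendsto' ((hlim.self_of_nhds).const_mul 2) (hplus.add hminus) (hf · h)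

theorem deriv_deriv_nonneg_of_two_mul_le {f : ℝ → ℝ} {x : ℝ} (hf : ContDiffAt ℝ 2 f x)
    (hmid : ∀ᶠ h in 𝓝 0, 2 * f x ≤ f (x + h) + f (x - h)) : 0 ≤ deriv (deriv f) x := by
  by_contra! hneg
  have hcont : ContinuousAt (deriv (deriv f)) x :=
    ((hf.derivWithin (m := 1) le_rfl).derivWithin (m := 0) le_rfl).continuousAt
  obtain ⟨ε, hε, hball⟩ := Metric.eventually_nhds_iff_ball.1
    ((hcont.eventually (eventually_lt_nhds hneg)).and (hf.eventually (by simp)))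
  have hconc : StrictConcaveOn ℝ (Metric.ball x ε) f :=
    strictConcaveOn_of_deriv2_neg' (convex_ball x ε)
      (fun y hy => (hball y hy).2.continuousAt.continuousWithinAt)
      (fun y hy => by simpa using (hball y hy).1)
  obtain ⟨h, hh, hpos, hlt⟩ := ((hmid.filter_mono (nhdsWithin_le_nhds (s := Ioi 0))).and
    (Ioo_mem_nhdsGT hε)).exists
  have hplus : x + h ∈ Metric.ball x ε := by simpa [Real.dist_eq, abs_of_pos hpos] using hlt
  have hminus : x - h ∈ Metric.ball x ε := by simpa [Real.dist_eq, abs_of_pos hpos] using hlt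
  have := hconc.2 hplus hminus (by linarith) one_half_pos one_half_pos (add_halves 1)
  simp only [smul_eq_mul] at this
  ring_nf at this hh
  linarith

theorem deriv_deriv_log_comp_exp {g : ℝ → ℝ} {t : ℝ} (hg : ContDiffAt ℝ 2 g (Real.exp t))
    (hg0 : g (Real.exp t) ≠ 0) :
    deriv (deriv fun s => Real.log (g (Real.exp s))) t =
      ((deriv (deriv g) (Real.exp t) * Real.exp t + deriv g (Real.exp t)) * Real.exp t
        * g (Real.exp t) - (deriv g (Real.exp t) * Real.exp t) ^ 2) / g (Real.exp t) ^ 2 := by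
  have hnear : ∀ᶠ y in 𝓝 (Real.exp t), DifferentiableAt ℝ g y ∧ g y ≠ 0 :=
    ((hg.eventually (by simp)).and (hg.continuousAt.eventually_ne hg0)).mono
      fun y hy => ⟨hy.1.differentiableAt two_ne_zero, hy.2⟩
  have hderiv : deriv (fun s => Real.log (g (Real.exp s))) =ᶠ[𝓝 t]
      fun s => deriv g (Real.exp s) * Real.exp s / g (Real.exp s) := by
    filter_upwards [Real.continuous_exp.continuousAt.eventually hnear] with s ⟨hd, hne⟩
    exact ((hd.hasDerivAt.comp s (Real.hasDerivAt_exp s)).log hne).deriv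
  have hg' : HasDerivAt (fun s => deriv g (Real.exp s))
      (deriv (deriv g) (Real.exp t) * Real.exp t) t :=
    ((hg.derivWithin (m := 1) le_rfl).differentiableAt one_ne_zero).hasDerivAt.comp t
      (Real.hasDerivAt_exp t)
  have hg'' : HasDerivAt (fun s => g (Real.exp s)) (deriv g (Real.exp t) * Real.exp t) t :=
    (hg.differentiableAt two_ne_zero).hasDerivAt.comp t (Real.hasDerivAt_exp t)
  rw [hderiv.deriv_eq, ((hg'.fun_mul (Real.hasDerivAt_exp t)).fun_div hg'' hg0).deriv]
  ring

theorem embedding_clt_v_nonneg_general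
    (P : ℕ → Polynomial ℝ)
    (hPcoeff : ∀ n i, ∃ m : ℕ, (P n).coeff i = (m : ℝ))
    (δ : ℝ) (hδ : 0 < δ) (lam : ℝ → ℝ)
    (hlamC2 : ContDiffOn ℝ 2 lam (Set.Ioo (1 - δ) (1 + δ)))
    (D : ℝ) (hD : D = lam 1) (hDpos : 0 < D)
    (a : ℝ → ℝ)
    (hunif : TendstoUniformlyOn (fun n x => (P n).eval x / lam x ^ n) a
      Filter.atTop (Set.Ioo (1 - δ) (1 + δ)))
    (ha1 : ContinuousAt a 1) (hapos : 0 < a 1)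
    (v : ℝ)
    (hv : v = (-(deriv lam 1) ^ 2 + D * deriv (deriv lam) 1 + D * deriv lam 1) / D ^ 2)
    : 0 ≤ v := by
  have hcoeff n i : 0 ≤ (P n).coeff i := by
    obtain ⟨m, hm⟩ := hPcoeff n i
    exact hm ▸ m.cast_nonneg
  have hI : Ioo (1 - δ) (1 + δ) ∈ 𝓝 1 := Ioo_mem_nhds (by linarith) (by linarith)
  have hlam : ContDiffAt ℝ 2 lam (Real.exp 0) := by rw [Real.exp_zero]; exact hlamC2.contDiffAt hI
  have hlam0 : lam (Real.exp 0) ≠ 0 := by rw [Real.exp_zero, ← hD]; exact hDpos.ne'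
  have hψ : ContDiffAt ℝ 2 (fun t => Real.log (lam (Real.exp t))) 0 :=
    (hlam.comp 0 Real.contDiff_exp.contDiffAt).log hlam0
  have hlim : ∀ᶠ t in 𝓝 0, Tendsto (fun n : ℕ => Real.log ((P n).eval (Real.exp t)) / n)
      atTop (𝓝 (Real.log (lam (Real.exp t)))) := by
    have hnear : ∀ᶠ x in 𝓝 1, x ∈ Ioo (1 - δ) (1 + δ) ∧ 0 < lam x ∧ 0 < a x :=
      Filter.Eventually.and hI <|
        ((hlamC2.continuousOn.continuousAt hI).eventually (eventually_gt_nhds (hD ▸ hDpos))).and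
          (ha1.eventually (eventually_gt_nhds hapos))
    filter_upwards [(Real.continuous_exp.tendsto' 0 1 Real.exp_zero).eventually hnear]
      with t ⟨hx, hl, ha⟩
    exact tendsto_log_div_natCast_of_tendsto_div_pow hl ha (hunif.tendsto_at hx)
  have hmid := eventually_two_mul_le_of_tendsto (fun n h => by
    rw [mul_div_assoc', ← add_div]
    exact div_le_div_of_nonneg_right ((P n).two_mul_log_eval_exp_le (hcoeff n) 0 h)
      n.cast_nonneg) hlim
  calc 0 ≤ _ := deriv_deriv_nonneg_of_two_mul_le hψ hmid
    _ = v := by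
      rw [deriv_deriv_log_comp_exp hlam hlam0, hv, hD]
      simp only [Real.exp_zero]
      ring

theorem embedding_clt_v_nonneg
    (k : ℕ) (hk : 1 ≤ k)
    (P : ℕ → Polynomial ℝ) (b : ℕ → Polynomial ℝ)
    (hPcoeff : ∀ n i, ∃ m : ℕ, (P n).coeff i = (m : ℝ))
    (hPpos : ∀ n, 1 ≤ n → 0 < (P n).eval 1)
    (hbint : ∀ j i, ∃ m : ℤ, (b j).coeff i = (m : ℝ))
    (hrec : ∀ n, k < n → ∀ x : ℝ,
      (P n).eval x = ∑ j ∈ Finset.range k, (b (j + 1)).eval x * (P (n - (j + 1))).eval x)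
    (F : ℝ → ℝ → ℝ)
    (hF : ∀ x l : ℝ,
      F x l = l ^ k - ∑ j ∈ Finset.range k, (b (j + 1)).eval x * l ^ (k - (j + 1)))
    (δ : ℝ) (hδ : 0 < δ) (lam : ℝ → ℝ)
    (hlamC2 : ContDiffOn ℝ 2 lam (Set.Ioo (1 - δ) (1 + δ)))
    (hlamroot : ∀ x ∈ Set.Ioo (1 - δ) (1 + δ), F x (lam x) = 0)
    (D : ℝ) (hD : D = lam 1) (hDpos : 0 < D)
    (Q : Polynomial ℂ)
    (hQ : Q = X ^ k -
      ∑ j ∈ Finset.range k, Polynomial.C (((b (j + 1)).eval 1 : ℝ) : ℂ) * X ^ (k - (j + 1)))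
    (hmult : Q.rootMultiplicity (D : ℂ) = 1)
    (hdom : ∀ μ : ℂ, Q.eval μ = 0 → μ ≠ (D : ℂ) → ‖μ‖ < D)
    (a : ℝ → ℝ)
    (hunif : TendstoUniformlyOn (fun n x => (P n).eval x / lam x ^ n) a
      Filter.atTop (Set.Ioo (1 - δ) (1 + δ)))
    (ha1 : ContinuousAt a 1) (hapos : 0 < a 1)
    (e v : ℝ) (he : e = deriv lam 1 / D)
    (hv : v = (-(deriv lam 1) ^ 2 + D * deriv (deriv lam) 1 + D * deriv lam 1) / D ^ 2)
    : 0 ≤ v :=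
  embedding_clt_v_nonneg_general P hPcoeff δ hδ lam hlamC2 D hD hDpos a hunif ha1 hapos v hv
end

section
/- Under setup (S), if v = 0, then for every α > 1/3 the variables (X_n − e·n)/n^α converge to the one-point distribution at 0: for every ε > 0, lim_{n→∞} ℙ(|X_n − e·n| > ε·n^α) = 0; equivalently, lim_{n→∞} ℙ((X_n − e·n)/n^α ≤ x) equals 1 for every x > 0 and equals 0 for every x < 0. -/
open Polynomial Filter Set MeasureTheory

/-!
Chernoff bounds with exponential tilting: `ℙ(X_n > M) ≤ P_n(x) / (x ^ M P_n(1))` for `x > 1`, and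
`ℙ(X_n < M)` obeys the same bound for `0 < x < 1`. By the uniform convergence,
`P_n(x) / P_n(1) ≈ (λ₁(x) / D) ^ n`, so for `M = e n ± ε n ^ α` the bound is roughly
`exp (n f(x) ∓ ε n ^ α log x)` with `f(x) = log (λ₁(x) / D) - e log x`. Implicit differentiation
at the simple root `D` makes `λ₁` of class `C³`, and `f(1) = f'(1) = 0`, `f''(1) = v = 0`, so
`f(x) = O((x - 1) ^ 3)`. At `x = 1 ± n ^ (-β)` the exponent is
`O(n ^ (1 - 3β)) - (ε / 2) n ^ (α - β)`, which tends to `-∞` as soon as `(1 - α) / 2 < β < α`;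
such `β` exist because `α > 1/3`.
-/

open Topology Asymptotics Real

theorem Polynomial.eval_derivative_ne_zero_of_rootMultiplicity_eq_one {R : Type*} [CommRing R]
    {p : R[X]} {a : R} (h : p.rootMultiplicity a = 1) : p.derivative.eval a ≠ 0 := by
  have hp : p ≠ 0 := by rintro rfl; simp at h
  intro ha
  have := (one_lt_rootMultiplicity_iff_isRoot hp).2 ⟨(rootMultiplicity_pos hp).1 (by omega), ha⟩
  omega

section Implicit

variable {𝕜 : Type*} [NontriviallyNormedField 𝕜] {G : 𝕜 × 𝕜 → 𝕜} {g : 𝕜 → 𝕜} {n : ℕ}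

-- Differentiating `G (x, g x) = 0` gives `g' = -∂₁G / ∂₂G`, which is `C^n` along with `g`.
theorem contDiffOn_succ_of_implicit {U : Set 𝕜} (hU : IsOpen U) (hn : 1 ≤ n)
    (hG : ContDiff 𝕜 (n + 1) G) (hg : ContDiffOn 𝕜 n g U) (hzero : ∀ x ∈ U, G (x, g x) = 0)
    (hG₂ : ∀ x ∈ U, fderiv 𝕜 G (x, g x) (0, 1) ≠ 0) : ContDiffOn 𝕜 (n + 1) g U := by
  have hgd : DifferentiableOn 𝕜 g U := hg.differentiableOn (by norm_cast; omega)
  have hpartial : ∀ v : 𝕜 × 𝕜, ContDiffOn 𝕜 n (fun x => fderiv 𝕜 G (x, g x) v) U := fun v =>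
    ((hG.fderiv_right le_rfl).clm_apply contDiff_const).comp_contDiffOn (contDiffOn_id.prodMk hg)
  have hderiv : ∀ x ∈ U,
      deriv g x = -fderiv 𝕜 G (x, g x) (1, 0) / fderiv 𝕜 G (x, g x) (0, 1) := by
    intro x hx
    have hcurve : HasDerivAt (fun y => G (y, g y)) (fderiv 𝕜 G (x, g x) (1, deriv g x)) x :=
      ((hG.differentiable (by simp)) _).hasFDerivAt.comp_hasDerivAt x
        ((hasDerivAt_id x).prodMk ((hgd x hx).differentiableAt (hU.mem_nhds hx)).hasDerivAt)
    have hconst : HasDerivAt (fun y => G (y, g y)) 0 x :=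
      (hasDerivAt_const x 0).congr_of_eventuallyEq
        (eventually_of_mem (hU.mem_nhds hx) fun y hy => hzero y hy)
    have hsplit : ((1 : 𝕜), deriv g x) = (1, 0) + deriv g x • (0, 1) := by simp
    have h0 := hcurve.unique hconst
    rw [hsplit, map_add, map_smul, smul_eq_mul] at h0
    rw [eq_div_iff (hG₂ x hx)]
    linear_combination h0
  refine (contDiffOn_succ_iff_deriv_of_isOpen hU).2 ⟨hgd, by simp, ?_⟩
  exact (((hpartial _).neg).div (hpartial _) hG₂).congr hderiv

theorem contDiffAt_succ_of_implicit {x₀ c : 𝕜} (hn : 1 ≤ n) (hG : ContDiff 𝕜 (n + 1) G)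
    (hg : ContDiffAt 𝕜 n g x₀) (hzero : ∀ᶠ x in 𝓝 x₀, G (x, g x) = 0)
    (hG₂ : HasDerivAt (fun y => G (x₀, y)) c (g x₀)) (hc : c ≠ 0) :
    ContDiffAt 𝕜 (n + 1) g x₀ := by
  have hcurve : ContinuousAt (fun x => (x, g x)) x₀ :=
    continuousAt_id.prodMk hg.continuousAt
  have hG₂c : fderiv 𝕜 G (x₀, g x₀) (0, 1) = c := by
    refine HasDerivAt.unique ?_ hG₂
    exact ((hG.differentiable (by simp)) _).hasFDerivAt.comp_hasDerivAt (g x₀)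
      ((hasDerivAt_const _ x₀).prodMk (hasDerivAt_id _))
  have hne : ∀ᶠ x in 𝓝 x₀, fderiv 𝕜 G (x, g x) (0, 1) ≠ 0 := by
    refine ContinuousAt.eventually_ne ?_ (hG₂c ▸ hc)
    exact ((hG.continuous_fderiv (by simp)).clm_apply continuous_const).continuousAt.comp hcurve
  obtain ⟨u, hu, hgu⟩ := hg.contDiffOn le_rfl (by simp)
  obtain ⟨U, hUsub, hUo, hxU⟩ := mem_nhds_iff.1 (inter_mem (inter_mem hu hzero) hne)
  exact (contDiffOn_succ_of_implicit hUo hn hG (hgu.mono fun x hx => (hUsub hx).1.1)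
    (fun x hx => (hUsub hx).1.2) fun x hx => (hUsub hx).2).contDiffAt (hUo.mem_nhds hxU)

end Implicit

theorem Polynomial.contDiff_eval {𝕜 : Type*} [NontriviallyNormedField 𝕜] (p : 𝕜[X])
    {n : WithTop ℕ∞} : ContDiff 𝕜 n p.eval := by
  simpa only [coe_aeval_eq_eval] using p.contDiff_aeval (𝕜 := 𝕜) n

theorem contDiffAt_three_of_rootMultiplicity_eq_one (k : ℕ) (b : ℕ → ℝ[X]) (F : ℝ → ℝ → ℝ)
    (hF : ∀ x l : ℝ,
      F x l = l ^ k - ∑ j ∈ Finset.range k, (b (j + 1)).eval x * l ^ (k - (j + 1)))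
    {δ : ℝ} (hδ : 0 < δ) {lam : ℝ → ℝ} (hlamC2 : ContDiffOn ℝ 2 lam (Set.Ioo (1 - δ) (1 + δ)))
    (hlamroot : ∀ x ∈ Set.Ioo (1 - δ) (1 + δ), F x (lam x) = 0)
    (hmult : (X ^ k - ∑ j ∈ Finset.range k,
      C (((b (j + 1)).eval 1 : ℝ) : ℂ) * X ^ (k - (j + 1))).rootMultiplicity (lam 1 : ℂ) = 1) :
    ContDiffAt ℝ 3 lam 1 := by
  set Q : ℝ[X] := X ^ k - ∑ j ∈ Finset.range k, C ((b (j + 1)).eval 1) * X ^ (k - (j + 1))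
  have hF1 : (fun l => F 1 l) = Q.eval := by
    funext l
    simp [hF, Q, eval_finsetSum]
  have hsimple : Q.derivative.eval (lam 1) ≠ 0 := by
    refine eval_derivative_ne_zero_of_rootMultiplicity_eq_one ?_
    rw [eq_rootMultiplicity_map (algebraMap ℝ ℂ).injective]
    simpa [Q, Polynomial.map_sub, Polynomial.map_sum] using hmult
  have hI : Set.Ioo (1 - δ) (1 + δ) ∈ 𝓝 (1 : ℝ) := Ioo_mem_nhds (by linarith) (by linarith)
  have hG : ContDiff ℝ 3 fun p : ℝ × ℝ => F p.1 p.2 := by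
    simp_rw [hF]
    exact (contDiff_snd.pow k).sub (ContDiff.sum fun j _ =>
      ((b (j + 1)).contDiff_eval.comp contDiff_fst).mul (contDiff_snd.pow _))
  exact contDiffAt_succ_of_implicit (n := 2) (by norm_num) hG (hlamC2.contDiffAt hI)
    (eventually_of_mem hI hlamroot) (hF1 ▸ Q.hasDerivAt (lam 1)) hsimple

section VanishingDerivatives

variable {E : Type*} [NormedAddCommGroup E] [NormedSpace ℝ E] {f : ℝ → E} {a : ℝ}

theorem isBigO_sub_pow_succ_of_deriv {m : ℕ} (hf : ∀ᶠ x in 𝓝 a, DifferentiableAt ℝ f x)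
    (hfa : f a = 0) (hf' : deriv f =O[𝓝 a] fun x => (x - a) ^ m) :
    f =O[𝓝 a] fun x => (x - a) ^ (m + 1) := by
  obtain ⟨C, hC, hCf⟩ := hf'.exists_pos
  obtain ⟨r, hr, hball⟩ := Metric.eventually_nhds_iff_ball.1 (hf.and hCf.bound)
  refine IsBigO.of_bound C (eventually_of_mem (Metric.ball_mem_nhds a hr) fun x hx => ?_)
  have hsub : Metric.closedBall a (dist x a) ⊆ Metric.ball a r :=
    Metric.closedBall_subset_ball (Metric.mem_ball.1 hx)
  have hbound : ∀ y ∈ Metric.closedBall a (dist x a), ‖deriv f y‖ ≤ C * ‖x - a‖ ^ m := by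
    intro y hy
    refine ((hball y (hsub hy)).2).trans ?_
    rw [norm_pow, ← dist_eq_norm, ← dist_eq_norm]
    gcongr
    exact hy
  have := (convex_closedBall a (dist x a)).norm_image_sub_le_of_norm_deriv_le
    (fun y hy => (hball y (hsub hy)).1) hbound (Metric.mem_closedBall_self dist_nonneg)
    (Metric.mem_closedBall.2 le_rfl)
  rw [hfa, sub_zero] at this
  rw [norm_pow, pow_succ, ← mul_assoc]
  exact this

theorem isBigO_sub_pow_of_iteratedDeriv_eq_zero {m : ℕ} (hf : ContDiffAt ℝ m f a)
    (h : ∀ i < m, iteratedDeriv i f a = 0) : f =O[𝓝 a] fun x => (x - a) ^ m := by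
  induction m generalizing f with
  | zero =>
    simpa using (isBigO_one_iff ℝ).2 hf.continuousAt.norm.isBoundedUnder_le
  | succ m ih =>
    refine isBigO_sub_pow_succ_of_deriv ?_ (by simpa using h 0 m.succ_pos) (ih ?_ fun i hi => ?_)
    · exact (hf.eventually (by simp)).mono fun y hy => hy.differentiableAt (by simp)
    · exact hf.derivWithin (by push_cast; rfl)
    · rw [← iteratedDeriv_succ']
      exact h (i + 1) (by omega)

end VanishingDerivatives

-- The second derivative at `1` of this function is the left side of `hv` divided by `lam 1 ^ 2`.
theorem isBigO_log_sub_log_sub_mul_log {lam : ℝ → ℝ} (hlam : ContDiffAt ℝ 3 lam 1)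
    (hpos : 0 < lam 1)
    (hv : -deriv lam 1 ^ 2 + lam 1 * deriv (deriv lam) 1 + lam 1 * deriv lam 1 = 0) :
    (fun x => log (lam x) - log (lam 1) - deriv lam 1 / lam 1 * log x) =O[𝓝 1]
      fun x => (x - 1) ^ 3 := by
  set e := deriv lam 1 / lam 1
  set φ : ℝ → ℝ := fun x => deriv lam x / lam x - e * x⁻¹
  have hnear : ∀ᶠ x in 𝓝 1, HasDerivAt lam (deriv lam x) x ∧ 0 < lam x ∧ 0 < x :=
    ((hlam.eventually (by simp)).and ((hlam.continuousAt.eventually (lt_mem_nhds hpos)).and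
      (lt_mem_nhds one_pos))).mono fun x hx =>
        ⟨(hx.1.differentiableAt (by simp)).hasDerivAt, hx.2⟩
  have hderiv : deriv (fun x => log (lam x) - log (lam 1) - e * log x) =ᶠ[𝓝 1] φ :=
    hnear.mono fun x hx =>
      (((hx.1.log hx.2.1.ne').sub_const _).sub ((hasDerivAt_log hx.2.2.ne').const_mul e)).deriv
  have hlam' : HasDerivAt (deriv lam) (deriv (deriv lam) 1) 1 :=
    ((hlam.derivWithin (m := 2) (by norm_num)).differentiableAt (by simp)).hasDerivAt
  have hφ : HasDerivAt φ
      ((deriv (deriv lam) 1 * lam 1 - deriv lam 1 * deriv lam 1) / lam 1 ^ 2 - e * -(1 ^ 2)⁻¹) 1 :=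
    (hlam'.div hnear.self_of_nhds.1 hpos.ne').sub ((hasDerivAt_inv one_ne_zero).const_mul e)
  refine isBigO_sub_pow_of_iteratedDeriv_eq_zero
    (((hlam.log hpos.ne').sub contDiffAt_const).sub
      (contDiffAt_const.mul (contDiffAt_log.2 one_ne_zero))) fun i hi => ?_
  interval_cases i
  · simp
  · rw [iteratedDeriv_one, hderiv.eq_of_nhds]
    simp [φ, e]
  · rw [iteratedDeriv_succ, iteratedDeriv_one, hderiv.deriv_eq, hφ.deriv]
    simp only [e]
    field_simp
    linear_combination hv

theorem sum_coeff_ite_le_eval_div_rpow {P : ℝ[X]} (hP : ∀ i, 0 ≤ P.coeff i) {x M : ℝ}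
    (hx : 0 < x) (cond : ℕ → Prop) [DecidablePred cond]
    (hcond : ∀ i, cond i → x ^ M ≤ x ^ (i : ℝ)) :
    ∑ i ∈ P.support, (if cond i then P.coeff i else 0) ≤ P.eval x / x ^ M := by
  rw [le_div_iff₀ (rpow_pos_of_pos hx M), eval_eq_sum, Polynomial.sum_def, Finset.sum_mul]
  refine Finset.sum_le_sum fun i _ => ?_
  split_ifs with h
  · rw [← rpow_natCast]
    exact mul_le_mul_of_nonneg_left (hcond i h) (hP i)
  · rw [zero_mul]
    exact mul_nonneg (hP i) (pow_nonneg hx.le i)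

theorem sum_ite_lt_abs_sub_eq (s : Finset ℕ) (p : ℕ → ℝ) {m c : ℝ} (hc : 0 ≤ c) :
    ∑ i ∈ s, (if c < |(i : ℝ) - m| then p i else 0) =
      ∑ i ∈ s, (if m + c < (i : ℝ) then p i else 0) +
        ∑ i ∈ s, (if (i : ℝ) < m - c then p i else 0) := by
  rw [← Finset.sum_add_distrib]
  refine Finset.sum_congr rfl fun i _ => ?_
  by_cases hlo : (i : ℝ) < m - c
  · rw [if_pos (by rw [abs_of_neg (by linarith)]; linarith), if_neg (by linarith), if_pos hlo,
      zero_add]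
  by_cases hhi : m + c < (i : ℝ)
  · rw [if_pos (by rw [abs_of_pos (by linarith)]; linarith), if_pos hhi, if_neg hlo, add_zero]
  · rw [if_neg (by rw [not_lt, abs_le]; constructor <;> linarith), if_neg hhi, if_neg hlo,
      add_zero]

theorem half_le_mul_log_one_add_mul {σ t : ℝ} (hσ : |σ| = 1) (ht : 0 ≤ t) (ht2 : t ≤ 1 / 2) :
    t / 2 ≤ σ * log (1 + σ * t) := by
  rcases abs_eq (zero_le_one' ℝ) |>.1 hσ with rfl | rfl
  · have h := one_sub_inv_le_log_of_pos (show 0 < 1 + 1 * t by linarith)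
    have hq : t / 2 ≤ 1 - (1 + 1 * t)⁻¹ := by
      rw [one_mul, show 1 - (1 + t)⁻¹ = t / (1 + t) by field_simp; ring]
      exact div_le_div_of_nonneg_left ht (by linarith) (by linarith)
    linarith
  · have h := log_le_sub_one_of_pos (show 0 < 1 + -1 * t by linarith)
    linarith

theorem tendsto_mul_rpow_sub_mul_rpow_atBot (K : ℝ) {c p q : ℝ} (hpq : p < q) (hq : 0 < q)
    (hc : 0 < c) : Tendsto (fun x : ℝ => K * x ^ p - c * x ^ q) atTop atBot := by
  have hlim : Tendsto (fun x : ℝ => K * x ^ (p - q) - c) atTop (𝓝 (K * 0 - c)) :=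
    ((tendsto_rpow_neg_atTop (sub_pos.2 hpq)).const_mul K).sub_const c |>.congr fun x => by
      rw [neg_sub]
  refine ((tendsto_rpow_atTop hq).atTop_mul_neg (by linarith) hlim).congr' ?_
  filter_upwards [eventually_gt_atTop 0] with x hx
  rw [mul_sub, ← mul_assoc, mul_comm (x ^ q) K, mul_assoc, ← rpow_add hx, add_sub_cancel]
  ring

theorem tendsto_one_add_mul_rpow_neg (σ : ℝ) {β : ℝ} (hβ : 0 < β) :
    Tendsto (fun n : ℕ => 1 + σ * (n : ℝ) ^ (-β)) atTop (𝓝 1) := by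
  simpa using
    (((tendsto_rpow_neg_atTop hβ).comp tendsto_natCast_atTop_atTop).const_mul σ).const_add 1

theorem tendsto_tilted_exponent_atBot {f : ℝ → ℝ} (hf : f =O[𝓝 1] fun x => (x - 1) ^ 3)
    {α β ε σ : ℝ} (hβ : 0 < β) (hβα : β < α) (hαβ : 1 - 2 * β < α) (hε : 0 < ε) (hσ : |σ| = 1) :
    Tendsto (fun n : ℕ => n * f (1 + σ * (n : ℝ) ^ (-β)) -
      σ * (ε * (n : ℝ) ^ α) * log (1 + σ * (n : ℝ) ^ (-β))) atTop atBot := by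
  obtain ⟨K, hK⟩ := hf.bound
  refine tendsto_atBot_mono' _ ?_ ((tendsto_mul_rpow_sub_mul_rpow_atBot K
    (by linarith : 1 - 3 * β < α - β) (by linarith) (half_pos hε)).comp tendsto_natCast_atTop_atTop)
  filter_upwards [(tendsto_one_add_mul_rpow_neg σ hβ).eventually hK,
    ((tendsto_rpow_neg_atTop hβ).comp tendsto_natCast_atTop_atTop).eventually
      (ge_mem_nhds one_half_pos),
    eventually_gt_atTop 0] with n hKn ht2 hn
  have hn' : (0 : ℝ) < n := Nat.cast_pos.2 hn
  set t := (n : ℝ) ^ (-β)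
  have ht0 : 0 < t := rpow_pos_of_pos hn' _
  have hcube : (n : ℝ) * t ^ 3 = (n : ℝ) ^ (1 - 3 * β) := by
    rw [← rpow_mul_natCast hn'.le, show 1 - 3 * β = 1 + -β * (3 : ℕ) by push_cast; ring,
      rpow_add hn', rpow_one]
  have hlin : ε * (n : ℝ) ^ α * t = ε * (n : ℝ) ^ (α - β) := by
    rw [mul_assoc, ← rpow_add hn', sub_eq_add_neg]
  have hft : f (1 + σ * t) ≤ K * t ^ 3 := by
    simpa [abs_mul, hσ, abs_of_pos ht0] using (le_abs_self _).trans hKn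
  have hfn : n * f (1 + σ * t) ≤ K * (n : ℝ) ^ (1 - 3 * β) := by
    rw [← hcube, mul_left_comm]
    exact mul_le_mul_of_nonneg_left hft hn'.le
  have hlog := mul_le_mul_of_nonneg_left (half_le_mul_log_one_add_mul hσ ht0.le ht2)
    (mul_nonneg hε.le (rpow_nonneg hn'.le α))
  simp only [Function.comp_apply]
  linarith

section Tails

variable {P : ℕ → ℝ[X]} {lam a : ℝ → ℝ} {s : Set ℝ}

theorem tendsto_tail_div_eval_one (hP : ∀ n i, 0 ≤ (P n).coeff i)
    (hunif : TendstoUniformlyOn (fun n x => (P n).eval x / lam x ^ n) a atTop s)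
    (hs : s ∈ 𝓝 1) (ha : ContinuousAt a 1) (ha1 : 0 < a 1) (hlam : ContinuousAt lam 1)
    (hlam1 : 0 < lam 1) {x M : ℕ → ℝ} (hx : Tendsto x atTop (𝓝 1))
    (cond : ℕ → ℕ → Prop) [∀ n, DecidablePred (cond n)]
    (hcond : ∀ᶠ n in atTop, ∀ i, cond n i → x n ^ M n ≤ x n ^ (i : ℝ))
    (hexp : Tendsto (fun n : ℕ => n * (log (lam (x n)) - log (lam 1)) - M n * log (x n))
      atTop atBot) :
    Tendsto (fun n => (∑ i ∈ (P n).support, if cond n i then (P n).coeff i else 0) /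
      (P n).eval 1) atTop (𝓝 0) := by
  have hlim : ∀ {y : ℕ → ℝ}, Tendsto y atTop (𝓝 1) →
      Tendsto (fun n => (P n).eval (y n) / lam (y n) ^ n) atTop (𝓝 (a 1)) := fun hy =>
    hunif.tendsto_comp ha.continuousWithinAt (nhdsWithin_eq_nhds.2 hs ▸ hy)
  have hratio : Tendsto (fun n => (P n).eval (x n) / lam (x n) ^ n /
      ((P n).eval 1 / lam 1 ^ n)) atTop (𝓝 1) := by
    have := (hlim hx).div (hlim tendsto_const_nhds) ha1.ne'
    rwa [div_self ha1.ne'] at this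
  have hnonneg : ∀ n, 0 ≤ (∑ i ∈ (P n).support, if cond n i then (P n).coeff i else 0) /
      (P n).eval 1 := fun n =>
    div_nonneg (Finset.sum_nonneg fun i _ => by split_ifs <;> simp [hP n i])
      (by rw [eval_eq_sum_range]; exact Finset.sum_nonneg fun i _ => by simp [hP n i])
  refine squeeze_zero' (Eventually.of_forall hnonneg) ?_
    (by simpa using hratio.mul (tendsto_exp_atBot.comp hexp))
  filter_upwards [hcond, hx.eventually (lt_mem_nhds one_pos),
    (hlam.tendsto.comp hx).eventually (lt_mem_nhds hlam1),
    (hlim tendsto_const_nhds).eventually (lt_mem_nhds ha1)] with n hcn hxn hlamn hPn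
  have hP1 : 0 < (P n).eval 1 := (div_pos_iff_of_pos_right (pow_pos hlam1 n)).1 hPn
  calc _ ≤ (P n).eval (x n) / x n ^ M n / (P n).eval 1 :=
        div_le_div_of_nonneg_right (sum_coeff_ite_le_eval_div_rpow (hP n) hxn _ hcn) hP1.le
    _ = _ := by
      rw [Function.comp_apply] at hlamn
      rw [exp_sub, exp_nat_mul, ← log_div hlamn.ne' hlam1.ne',
        exp_log (div_pos hlamn hlam1), rpow_def_of_pos hxn, mul_comm (log (x n)), div_pow]
      field_simp

theorem tendsto_two_sided_tail_div_eval_one (hP : ∀ n i, 0 ≤ (P n).coeff i)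
    (hunif : TendstoUniformlyOn (fun n x => (P n).eval x / lam x ^ n) a atTop s)
    (hs : s ∈ 𝓝 1) (ha : ContinuousAt a 1) (ha1 : 0 < a 1) (hlam : ContinuousAt lam 1)
    (hlam1 : 0 < lam 1) {e : ℝ}
    (hf : (fun x => log (lam x) - log (lam 1) - e * log x) =O[𝓝 1] fun x => (x - 1) ^ 3)
    {α ε : ℝ} (hα : 1 / 3 < α) (hε : 0 < ε) :
    Tendsto (fun n : ℕ => (∑ i ∈ (P n).support,
      if ε * (n : ℝ) ^ α < |(i : ℝ) - e * n| then (P n).coeff i else 0) / (P n).eval 1)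
      atTop (𝓝 0) := by
  -- `β` is the midpoint of `((1 - α) / 2, α)`.
  set β := (1 + α) / 4 with hβdef
  have hβ : 0 < β := by positivity
  have hβα : β < α := by rw [hβdef]; linarith
  have hαβ : 1 - 2 * β < α := by rw [hβdef]; linarith
  have hside : ∀ σ, |σ| = 1 → Tendsto (fun n : ℕ =>
      n * (log (lam (1 + σ * (n : ℝ) ^ (-β))) - log (lam 1)) -
        (e * n + σ * (ε * (n : ℝ) ^ α)) * log (1 + σ * (n : ℝ) ^ (-β))) atTop atBot :=
    fun σ hσ => (tendsto_tilted_exponent_atBot hf hβ hβα hαβ hε hσ).congr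
      fun n => by ring
  have hupper := tendsto_tail_div_eval_one hP hunif hs ha ha1 hlam hlam1
    (tendsto_one_add_mul_rpow_neg 1 hβ) (fun n i => e * n + ε * (n : ℝ) ^ α < (i : ℝ))
    (Eventually.of_forall fun n i hi => rpow_le_rpow_of_exponent_le
      (by simp only [one_mul, le_add_iff_nonneg_right]; positivity) (by linarith))
    (hside 1 (by simp))
  have hlower := tendsto_tail_div_eval_one hP hunif hs ha ha1 hlam hlam1
    (tendsto_one_add_mul_rpow_neg (-1) hβ) (fun n i => (i : ℝ) < e * n - ε * (n : ℝ) ^ α)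
    (((tendsto_one_add_mul_rpow_neg (-1) hβ).eventually (lt_mem_nhds one_pos)).mono
      fun n hn i hi => rpow_le_rpow_of_exponent_ge hn
        (by simp only [neg_one_mul, add_neg_le_iff_le_add, le_add_iff_nonneg_right]; positivity)
        (by linarith))
    (hside (-1) (by simp))
  have htails := hupper.add hlower
  rw [add_zero] at htails
  refine htails.congr fun n => ?_
  rw [sum_ite_lt_abs_sub_eq _ _ (by positivity), add_div]

end Tails

theorem embedding_clt_one_point_limit_general
    (k : ℕ)
    (P : ℕ → Polynomial ℝ) (b : ℕ → Polynomial ℝ)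
    (hPcoeff : ∀ n i, ∃ m : ℕ, (P n).coeff i = (m : ℝ))
    (F : ℝ → ℝ → ℝ)
    (hF : ∀ x l : ℝ,
      F x l = l ^ k - ∑ j ∈ Finset.range k, (b (j + 1)).eval x * l ^ (k - (j + 1)))
    (δ : ℝ) (hδ : 0 < δ) (lam : ℝ → ℝ)
    (hlamC2 : ContDiffOn ℝ 2 lam (Set.Ioo (1 - δ) (1 + δ)))
    (hlamroot : ∀ x ∈ Set.Ioo (1 - δ) (1 + δ), F x (lam x) = 0)
    (D : ℝ) (hD : D = lam 1) (hDpos : 0 < D)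
    (Q : Polynomial ℂ)
    (hQ : Q = X ^ k -
      ∑ j ∈ Finset.range k, Polynomial.C (((b (j + 1)).eval 1 : ℝ) : ℂ) * X ^ (k - (j + 1)))
    (hmult : Q.rootMultiplicity (D : ℂ) = 1)
    (a : ℝ → ℝ)
    (hunif : TendstoUniformlyOn (fun n x => (P n).eval x / lam x ^ n) a
      Filter.atTop (Set.Ioo (1 - δ) (1 + δ)))
    (ha1 : ContinuousAt a 1) (hapos : 0 < a 1)
    (e v : ℝ) (he : e = deriv lam 1 / D)
    (hv : v = (-(deriv lam 1) ^ 2 + D * deriv (deriv lam) 1 + D * deriv lam 1) / D ^ 2)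
    (hv0 : v = 0) :
    ∀ α : ℝ, 1 / 3 < α → ∀ ε : ℝ, 0 < ε →
      Filter.Tendsto (fun n : ℕ =>
        (∑ i ∈ (P n).support,
          if ε * (n : ℝ) ^ α < |(i : ℝ) - e * n| then (P n).coeff i else 0) / (P n).eval 1)
        Filter.atTop (nhds 0) := by
  intro α hα ε hε
  subst hD he hQ hv0
  have hP : ∀ n i, 0 ≤ (P n).coeff i := fun n i => by
    obtain ⟨m, hm⟩ := hPcoeff n i
    exact hm ▸ m.cast_nonneg
  have hlam := contDiffAt_three_of_rootMultiplicity_eq_one k b F hF hδ hlamC2 hlamroot hmult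
  have hvanish : -deriv lam 1 ^ 2 + lam 1 * deriv (deriv lam) 1 + lam 1 * deriv lam 1 = 0 := by
    simpa [hDpos.ne'] using hv.symm
  exact tendsto_two_sided_tail_div_eval_one hP hunif (Ioo_mem_nhds (by linarith) (by linarith))
    ha1 hapos hlam.continuousAt hDpos (isBigO_log_sub_log_sub_mul_log hlam hDpos hvanish) hα hε

theorem embedding_clt_one_point_limit
    (k : ℕ) (hk : 1 ≤ k)
    (P : ℕ → Polynomial ℝ) (b : ℕ → Polynomial ℝ)
    (hPcoeff : ∀ n i, ∃ m : ℕ, (P n).coeff i = (m : ℝ))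
    (hPpos : ∀ n, 1 ≤ n → 0 < (P n).eval 1)
    (hbint : ∀ j i, ∃ m : ℤ, (b j).coeff i = (m : ℝ))
    (hrec : ∀ n, k < n → ∀ x : ℝ,
      (P n).eval x = ∑ j ∈ Finset.range k, (b (j + 1)).eval x * (P (n - (j + 1))).eval x)
    (F : ℝ → ℝ → ℝ)
    (hF : ∀ x l : ℝ,
      F x l = l ^ k - ∑ j ∈ Finset.range k, (b (j + 1)).eval x * l ^ (k - (j + 1)))
    (δ : ℝ) (hδ : 0 < δ) (lam : ℝ → ℝ)
    (hlamC2 : ContDiffOn ℝ 2 lam (Set.Ioo (1 - δ) (1 + δ)))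
    (hlamroot : ∀ x ∈ Set.Ioo (1 - δ) (1 + δ), F x (lam x) = 0)
    (D : ℝ) (hD : D = lam 1) (hDpos : 0 < D)
    (Q : Polynomial ℂ)
    (hQ : Q = X ^ k -
      ∑ j ∈ Finset.range k, Polynomial.C (((b (j + 1)).eval 1 : ℝ) : ℂ) * X ^ (k - (j + 1)))
    (hmult : Q.rootMultiplicity (D : ℂ) = 1)
    (hdom : ∀ μ : ℂ, Q.eval μ = 0 → μ ≠ (D : ℂ) → ‖μ‖ < D)
    (a : ℝ → ℝ)
    (hunif : TendstoUniformlyOn (fun n x => (P n).eval x / lam x ^ n) a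
      Filter.atTop (Set.Ioo (1 - δ) (1 + δ)))
    (ha1 : ContinuousAt a 1) (hapos : 0 < a 1)
    (e v : ℝ) (he : e = deriv lam 1 / D)
    (hv : v = (-(deriv lam 1) ^ 2 + D * deriv (deriv lam) 1 + D * deriv lam 1) / D ^ 2)
    (hv0 : v = 0) :
    ∀ α : ℝ, 1 / 3 < α → ∀ ε : ℝ, 0 < ε →
      Filter.Tendsto (fun n : ℕ =>
        (∑ i ∈ (P n).support,
          if ε * (n : ℝ) ^ α < |(i : ℝ) - e * n| then (P n).coeff i else 0) / (P n).eval 1)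
        Filter.atTop (nhds 0) :=
  embedding_clt_one_point_limit_general k P b hPcoeff F hF δ hδ lam hlamC2 hlamroot D hD hDpos Q hQ
    hmult a hunif ha1 hapos e v he hv hv0
end

section
/- Suppose the recurrence coefficients b_1, …, b_k are integer constants, D > 0 is a root of multiplicity one of F(λ) = λ^k − b_1λ^{k−1} − ⋯ − b_k with |μ| < D for every other complex root μ, and the pointwise limit a(x) := lim_{n→∞} P_n(x)/D^n (which exists for every real x) satisfies a(1) > 0. Then a(x) is a polynomial, say a(x) = Σ_{j=0}^{κ} c_j x^j, and setting ω_j := c_j/a(1) one has ω_j ≥ 0, Σ_{j=0}^{κ} ω_j = 1, and for every j ∈ ℕ, lim_{n→∞} p_j(n)/P_n(1) = ω_j (with ω_j := 0 for j > κ); i.e., the limit of the laws of X_n is a discrete distribution. -/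
open Polynomial Filter Set
open scoped Topology

/-! The recurrence bounds the degree of every `P n` by the largest degree among
`P 0, …, P k`. A polynomial of degree at most `d` is the Lagrange interpolant of its values at
`0, …, d`, so its coefficients are fixed linear combinations of these values: pointwise
convergence of `P n / D ^ n` therefore gives convergence of every coefficient, the limit
function is the polynomial `A` with the limit coefficients, and these are nonnegative as limits
of nonnegative numbers. Dividing by `a 1 = A.eval 1`, the limit of `P n (1) / D ^ n`,
normalises them. -/

theorem Polynomial.exists_natDegree_le_of_linear_recurrence {R : Type*} [Semiring R]
    (k : ℕ) (c : ℕ → R) (P : ℕ → R[X])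
    (hrec : ∀ n, k < n → P n = ∑ j ∈ Finset.range k, C (c j) * P (n - (j + 1))) :
    ∃ d, ∀ n, (P n).natDegree ≤ d := by
  refine ⟨(Finset.range (k + 1)).sup fun m => (P m).natDegree, fun n => ?_⟩
  induction n using Nat.strong_induction_on with
  | _ n ih =>
    by_cases hn : k < n
    · rw [hrec n hn]
      exact natDegree_sum_le_of_forall_le _ _ fun j _ =>
        (natDegree_C_mul_le _ _).trans (ih _ (by omega))
    · exact Finset.le_sup (f := fun m => (P m).natDegree) (Finset.mem_range.mpr (by omega))

theorem Polynomial.tendsto_eval_of_tendsto_coeff {R : Type*} [Semiring R] [TopologicalSpace R]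
    [IsTopologicalSemiring R] {ι : Type*} {l : Filter ι} {P : ι → R[X]} {d : ℕ}
    (hdeg : ∀ t, (P t).natDegree ≤ d) {A : R[X]} (hA : A.natDegree ≤ d)
    (hlim : ∀ j, Tendsto (fun t => (P t).coeff j) l (𝓝 (A.coeff j))) (x : R) :
    Tendsto (fun t => (P t).eval x) l (𝓝 (A.eval x)) := by
  rw [eval_eq_sum_range' (Nat.lt_succ_of_le hA)]
  simp only [eval_eq_sum_range' (Nat.lt_succ_of_le (hdeg _))]
  exact tendsto_finsetSum _ fun j _ => (hlim j).mul_const _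

section Convergence

variable {K : Type*} [Field K] [TopologicalSpace K] [IsTopologicalRing K] {ι : Type*}
  {l : Filter ι} {P : ι → K[X]}

theorem Lagrange.tendsto_coeff_interpolate {κ : Type*} [DecidableEq κ] {s : Finset κ}
    {v : κ → K} (hv : InjOn v s) (hdeg : ∀ t, (P t).degree < s.card) {r : κ → K}
    (hlim : ∀ i ∈ s, Tendsto (fun t => (P t).eval (v i)) l (𝓝 (r i))) (j : ℕ) :
    Tendsto (fun t => (P t).coeff j) l (𝓝 ((Lagrange.interpolate s v r).coeff j)) := by
  have hcoeff (f : κ → K) : (Lagrange.interpolate s v f).coeff j =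
      ∑ i ∈ s, f i * (Lagrange.basis s v i).coeff j := by
    simp only [Lagrange.interpolate_apply, finsetSum_coeff, coeff_C_mul]
  rw [hcoeff]
  refine (tendsto_finsetSum s fun i hi => (hlim i hi).mul_const _).congr fun t => ?_
  rw [← hcoeff, ← Lagrange.eq_interpolate hv (hdeg t)]

theorem Polynomial.exists_eq_eval_of_tendsto_eval [CharZero K] [T2Space K] [l.NeBot] {d : ℕ}
    (hdeg : ∀ t, (P t).natDegree ≤ d) {a : K → K}
    (hlim : ∀ x, Tendsto (fun t => (P t).eval x) l (𝓝 (a x))) :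
    ∃ A : K[X], (∀ x, a x = A.eval x) ∧
      ∀ j, Tendsto (fun t => (P t).coeff j) l (𝓝 (A.coeff j)) := by
  classical
  have hv : InjOn (Nat.cast : ℕ → K) (Finset.range (d + 1)) := Nat.cast_injective.injOn
  have hcard : ∀ t, (P t).degree < (Finset.range (d + 1)).card := fun t => by
    rw [Finset.card_range]
    exact degree_le_natDegree.trans_lt (by exact_mod_cast Nat.lt_succ_of_le (hdeg t))
  set A := Lagrange.interpolate (Finset.range (d + 1)) (Nat.cast : ℕ → K) (fun i : ℕ => a i)
  have hA : A.natDegree ≤ d := by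
    have := Lagrange.degree_interpolate_lt (fun i : ℕ => a i) hv
    rw [Finset.card_range] at this
    exact natDegree_le_iff_coeff_eq_zero.mpr fun N => (degree_lt_iff_coeff_zero _ _).mp this N
  have hcoeff := Lagrange.tendsto_coeff_interpolate hv hcard fun i _ => hlim i
  exact ⟨A, fun x => tendsto_nhds_unique (hlim x)
    (tendsto_eval_of_tendsto_coeff hdeg hA hcoeff x), hcoeff⟩

end Convergence

theorem discrete_limit_of_constant_coefficients_general
    (k : ℕ)
    (P : ℕ → Polynomial ℝ) (b : ℕ → ℤ)
    (hPcoeff : ∀ n i, ∃ m : ℕ, (P n).coeff i = (m : ℝ))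
    (hrec : ∀ n, k < n → ∀ x : ℝ,
      (P n).eval x = ∑ j ∈ Finset.range k, (b (j + 1) : ℝ) * (P (n - (j + 1))).eval x)
    (D : ℝ) (hDpos : 0 < D)
    (a : ℝ → ℝ)
    (hlim : ∀ x : ℝ, Filter.Tendsto (fun n : ℕ => (P n).eval x / D ^ n)
      Filter.atTop (nhds (a x)))
    (hapos : 0 < a 1) :
    ∃ A : Polynomial ℝ,
      (∀ x : ℝ, a x = A.eval x) ∧
      (∀ j : ℕ, 0 ≤ A.coeff j / a 1) ∧
      (∑ j ∈ A.support, A.coeff j / a 1) = 1 ∧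
      ∀ j : ℕ, Filter.Tendsto (fun n : ℕ => (P n).coeff j / (P n).eval 1)
        Filter.atTop (nhds (A.coeff j / a 1)) := by
  obtain ⟨d, hdeg⟩ := exists_natDegree_le_of_linear_recurrence k (fun j => (b (j + 1) : ℝ)) P
    fun n hn => Polynomial.funext fun x => by simp [hrec n hn x, eval_finsetSum]
  obtain ⟨A, haA, hcoeff⟩ := exists_eq_eval_of_tendsto_eval (P := fun n => C (D ^ n)⁻¹ * P n)
    (fun n => (natDegree_C_mul_le _ _).trans (hdeg n)) (a := a)
    (by simpa only [eval_C_mul, inv_mul_eq_div] using hlim)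
  simp only [coeff_C_mul, inv_mul_eq_div] at hcoeff
  have hA_nonneg (j : ℕ) : 0 ≤ A.coeff j := ge_of_tendsto' (hcoeff j) fun n => by
    obtain ⟨m, hm⟩ := hPcoeff n j
    rw [hm]
    positivity
  refine ⟨A, haA, fun j => div_nonneg (hA_nonneg j) hapos.le, ?_, fun j => ?_⟩
  · have hsum : ∑ j ∈ A.support, A.coeff j = a 1 := by simp [haA, eval_eq_sum, sum_def]
    rw [← Finset.sum_div, hsum, div_self hapos.ne']
  · refine ((hcoeff j).div (hlim 1) hapos.ne').congr fun n => ?_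
    exact div_div_div_cancel_right₀ (pow_pos hDpos n).ne' _ _

theorem discrete_limit_of_constant_coefficients
    (k : ℕ) (hk : 1 ≤ k)
    (P : ℕ → Polynomial ℝ) (b : ℕ → ℤ)
    (hPcoeff : ∀ n i, ∃ m : ℕ, (P n).coeff i = (m : ℝ))
    (hPpos : ∀ n, 1 ≤ n → 0 < (P n).eval 1)
    (hrec : ∀ n, k < n → ∀ x : ℝ,
      (P n).eval x = ∑ j ∈ Finset.range k, (b (j + 1) : ℝ) * (P (n - (j + 1))).eval x)
    (D : ℝ) (hDpos : 0 < D)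
    (Q : Polynomial ℂ)
    (hQ : Q = X ^ k - ∑ j ∈ Finset.range k, Polynomial.C ((b (j + 1) : ℂ)) * X ^ (k - (j + 1)))
    (hroot : Q.eval (D : ℂ) = 0)
    (hmult : Q.rootMultiplicity (D : ℂ) = 1)
    (hdom : ∀ μ : ℂ, Q.eval μ = 0 → μ ≠ (D : ℂ) → ‖μ‖ < D)
    (a : ℝ → ℝ)
    (hlim : ∀ x : ℝ, Filter.Tendsto (fun n : ℕ => (P n).eval x / D ^ n)
      Filter.atTop (nhds (a x)))
    (hapos : 0 < a 1) :
    ∃ A : Polynomial ℝ,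
      (∀ x : ℝ, a x = A.eval x) ∧
      (∀ j : ℕ, 0 ≤ A.coeff j / a 1) ∧
      (∑ j ∈ A.support, A.coeff j / a 1) = 1 ∧
      ∀ j : ℕ, Filter.Tendsto (fun n : ℕ => (P n).coeff j / (P n).eval 1)
        Filter.atTop (nhds (A.coeff j / a 1)) :=
  discrete_limit_of_constant_coefficients_general k P b hPcoeff hrec D hDpos a hlim hapos
end

section
/- For every n and every real x, | Σ_{0 ≤ i ≤ x} ε_i(n)/E_n − Σ_{0 ≤ i ≤ x} γ̃_i(n)/Γ̃_n | ≤ 2·a_n. -/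
open Filter

/-- `Σ_{0 ≤ i ≤ x} g i` for a finitely supported family `g`. -/
noncomputable def crosscapCDF (g : ℕ →₀ ℝ) (x : ℝ) : ℝ :=
  ∑ i ∈ g.support, if (i : ℝ) ≤ x then g i else 0

/-- `Σ_{0 ≤ i ≤ x} ε_i` where `ε_i = γ_{i/2} + γ̃_i` for even `i` and `ε_i = γ̃_i` for odd `i`. -/
noncomputable def eulerCDF (γ γt : ℕ →₀ ℝ) (x : ℝ) : ℝ :=
  (∑ j ∈ γ.support, if ((2 * j : ℕ) : ℝ) ≤ x then γ j else 0) + crosscapCDF γt x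

theorem euler_genus_crosscap_cdf_bound
    (γ γt : ℕ → ℕ →₀ ℝ)
    (hγ : ∀ n i, 0 ≤ γ n i) (hγt : ∀ n i, 0 ≤ γt n i)
    (Γ Γt E a : ℕ → ℝ)
    (hΓ : ∀ n, Γ n = ∑ i ∈ (γ n).support, γ n i)
    (hΓt : ∀ n, Γt n = ∑ i ∈ (γt n).support, γt n i)
    (hE : ∀ n, E n = Γ n + Γt n)
    (hΓtpos : ∀ n, 0 < Γt n)
    (ha : ∀ n, a n = Γ n / E n)
    :
    ∀ (n : ℕ) (x : ℝ),
      |eulerCDF (γ n) (γt n) x / E n - crosscapCDF (γt n) x / Γt n| ≤ 2 * a n := by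
  intro n x
  have hGnn : 0 ≤ Γ n := by
    rw [hΓ]; exact Finset.sum_nonneg fun i _ => hγ n i
  have hTpos := hΓtpos n
  have hEpos : 0 < E n := by rw [hE]; linarith
  set S := ∑ j ∈ (γ n).support, if ((2 * j : ℕ) : ℝ) ≤ x then γ n j else 0 with hS
  set C := crosscapCDF (γt n) x with hC
  have hSnn : 0 ≤ S := Finset.sum_nonneg fun i _ => by
    split_ifs
    · exact hγ n i
    · exact le_rfl
  have hSle : S ≤ Γ n := by
    rw [hΓ]
    refine Finset.sum_le_sum fun i _ => ?_
    split_ifs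
    · exact le_rfl
    · exact hγ n i
  have hCnn : 0 ≤ C := Finset.sum_nonneg fun i _ => by
    split_ifs
    · exact hγt n i
    · exact le_rfl
  have hCle : C ≤ Γt n := by
    rw [hC, crosscapCDF, hΓt]
    refine Finset.sum_le_sum fun i _ => ?_
    split_ifs
    · exact le_rfl
    · exact hγt n i
  have hEdef := hE n
  have heul : eulerCDF (γ n) (γt n) x = S + C := rfl
  rw [heul, ha, abs_le]
  constructor
  · rw [neg_le, neg_sub, div_sub_div _ _ (ne_of_gt hTpos) (ne_of_gt hEpos),
      mul_div_assoc', div_le_div_iff₀ (mul_pos hTpos hEpos) hEpos, hEdef]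
    nlinarith [mul_le_mul_of_nonneg_left hCle hGnn, mul_le_mul_of_nonneg_left hSle hTpos.le,
      mul_nonneg hCnn hGnn, mul_nonneg hSnn hTpos.le, mul_nonneg hGnn hTpos.le,
      mul_nonneg hGnn hGnn, mul_pos hTpos hTpos]
  · rw [div_sub_div _ _ (ne_of_gt hEpos) (ne_of_gt hTpos),
      mul_div_assoc', div_le_div_iff₀ (mul_pos hEpos hTpos) hEpos, hEdef]
    nlinarith [mul_le_mul_of_nonneg_left hCle hGnn, mul_le_mul_of_nonneg_left hSle hTpos.le,
      mul_nonneg hCnn hGnn, mul_nonneg hSnn hTpos.le, mul_nonneg hGnn hTpos.le,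
      mul_nonneg hGnn hGnn, mul_pos hTpos hTpos]
end

section
/- Let p(x) and q(x) be real polynomials with nonnegative coefficients such that q(1) > 0. Then 2·q(1)² − 27·(p′(1)+q′(1))² + 9·q(1)·(3p″(1) + 3q″(1) + 3q′(1) + 7p′(1)) + p(1)·(27p″(1) + 27p′(1) + 27q″(1) − 9q′(1) + 14q(1)) > 0. Consequently v := (4/(27(p(1)+q(1)))) times this quantity is strictly positive. -/
open Polynomial
open Finset

lemma eval_one_sum' {r : Polynomial ℝ} {N : ℕ} (hN : r.natDegree < N) :
    r.eval 1 = ∑ i ∈ range N, r.coeff i := by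
  rw [eval_eq_sum_range' hN]; simp

lemma deriv_eval_one_sum' {r : Polynomial ℝ} {N : ℕ} (hN : r.natDegree < N) :
    r.derivative.eval 1 = ∑ i ∈ range N, (i : ℝ) * r.coeff i := by
  have hd : r.derivative.natDegree < N :=
    lt_of_le_of_lt ((natDegree_derivative_le r).trans (Nat.sub_le _ _)) hN
  rw [eval_one_sum' hd]
  have h1 : ∑ i ∈ range N, (i : ℝ) * r.coeff i
      = ∑ i ∈ range (N + 1), (i : ℝ) * r.coeff i := by
    rw [Finset.sum_range_succ, coeff_eq_zero_of_natDegree_lt hN, mul_zero, add_zero]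
  rw [h1, Finset.sum_range_succ']
  simp [coeff_derivative, mul_comm]

lemma deriv2_eval_one_sum' {r : Polynomial ℝ} {N : ℕ} (hN : r.natDegree < N) :
    (Polynomial.derivative (Polynomial.derivative r)).eval 1
      = ∑ i ∈ range N, (i : ℝ) * ((i : ℝ) - 1) * r.coeff i := by
  have hdN : r.derivative.natDegree < N :=
    lt_of_le_of_lt ((natDegree_derivative_le r).trans (Nat.sub_le _ _)) hN
  rw [deriv_eval_one_sum' hdN]
  have hext : ∑ i ∈ range N, (i : ℝ) * ((i : ℝ) - 1) * r.coeff i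
      = ∑ i ∈ range (N + 1), (i : ℝ) * ((i : ℝ) - 1) * r.coeff i := by
    rw [Finset.sum_range_succ, coeff_eq_zero_of_natDegree_lt hN, mul_zero, add_zero]
  rw [hext, Finset.sum_range_succ']
  simp only [Nat.cast_zero, zero_mul, mul_zero, zero_sub, add_zero]
  refine Finset.sum_congr rfl fun i _ => ?_
  rw [coeff_derivative]
  push_cast
  ring

/-- scalar facts for a polynomial with nonnegative coefficients -/
lemma poly_facts (r : Polynomial ℝ) (hr : ∀ i, 0 ≤ r.coeff i) :
    0 ≤ r.eval 1 ∧ 0 ≤ r.derivative.eval 1 ∧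
    0 ≤ (Polynomial.derivative (Polynomial.derivative r)).eval 1 ∧
    (r.derivative.eval 1) ^ 2 ≤
      r.eval 1 * ((Polynomial.derivative (Polynomial.derivative r)).eval 1
        + r.derivative.eval 1) := by
  obtain ⟨N, hN⟩ : ∃ N, r.natDegree < N := ⟨r.natDegree + 1, Nat.lt_succ_self _⟩
  have hdN : r.derivative.natDegree < N :=
    lt_of_le_of_lt ((natDegree_derivative_le r).trans (Nat.sub_le _ _)) hN
  have h0 : r.eval 1 = ∑ i ∈ range N, r.coeff i := eval_one_sum' hN
  have h1 : r.derivative.eval 1 = ∑ i ∈ range N, (i : ℝ) * r.coeff i :=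
    deriv_eval_one_sum' hN
  have h2 : (Polynomial.derivative (Polynomial.derivative r)).eval 1
      = ∑ i ∈ range N, (i : ℝ) * ((i : ℝ) - 1) * r.coeff i := deriv2_eval_one_sum' hN
  have hs0 : 0 ≤ r.eval 1 := by
    rw [h0]; exact Finset.sum_nonneg fun i _ => hr i
  have hs1 : 0 ≤ r.derivative.eval 1 := by
    rw [h1]; exact Finset.sum_nonneg fun i _ => mul_nonneg (Nat.cast_nonneg i) (hr i)
  have hs2 : 0 ≤ (Polynomial.derivative (Polynomial.derivative r)).eval 1 := by
    rw [h2]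
    refine Finset.sum_nonneg fun i _ => mul_nonneg ?_ (hr i)
    rcases Nat.eq_zero_or_pos i with h | h
    · simp [h]
    · have h1' : (1 : ℝ) ≤ (i : ℝ) := by exact_mod_cast h
      nlinarith
  refine ⟨hs0, hs1, hs2, ?_⟩
  have key : (∑ i ∈ range N, (i : ℝ) * r.coeff i) ^ 2 ≤
      (∑ i ∈ range N, r.coeff i) * (∑ i ∈ range N, (i : ℝ) ^ 2 * r.coeff i) := by
    have := Finset.sum_mul_sq_le_sq_mul_sq (range N)
      (fun i => Real.sqrt (r.coeff i)) (fun i => (i : ℝ) * Real.sqrt (r.coeff i))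
    have e1 : ∀ i ∈ range N, Real.sqrt (r.coeff i) * ((i : ℝ) * Real.sqrt (r.coeff i))
        = (i : ℝ) * r.coeff i := by
      intro i _
      rw [mul_left_comm, Real.mul_self_sqrt (hr i)]
    have e2 : ∀ i ∈ range N, Real.sqrt (r.coeff i) ^ 2 = r.coeff i := by
      intro i _; exact Real.sq_sqrt (hr i)
    have e3 : ∀ i ∈ range N, ((i : ℝ) * Real.sqrt (r.coeff i)) ^ 2
        = (i : ℝ) ^ 2 * r.coeff i := by
      intro i _; rw [mul_pow, Real.sq_sqrt (hr i)]
    rwa [Finset.sum_congr rfl e1, Finset.sum_congr rfl e2, Finset.sum_congr rfl e3] at this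
  have hsum : (Polynomial.derivative (Polynomial.derivative r)).eval 1
      + r.derivative.eval 1 = ∑ i ∈ range N, (i : ℝ) ^ 2 * r.coeff i := by
    rw [h1, h2, ← Finset.sum_add_distrib]
    refine Finset.sum_congr rfl fun i _ => by ring
  rw [hsum, h1, h0]
  exact key

theorem ladderlike_variance_positive
    (p q : Polynomial ℝ)
    (hp : ∀ i, 0 ≤ p.coeff i) (hq : ∀ i, 0 ≤ q.coeff i)
    (hq1 : 0 < q.eval 1) :
    0 < 2 * (q.eval 1) ^ 2 - 27 * (p.derivative.eval 1 + q.derivative.eval 1) ^ 2 +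
        9 * q.eval 1 *
          (3 * (Polynomial.derivative (Polynomial.derivative p)).eval 1 +
            3 * (Polynomial.derivative (Polynomial.derivative q)).eval 1 +
            3 * q.derivative.eval 1 + 7 * p.derivative.eval 1) +
        p.eval 1 *
          (27 * (Polynomial.derivative (Polynomial.derivative p)).eval 1 +
            27 * p.derivative.eval 1 +
            27 * (Polynomial.derivative (Polynomial.derivative q)).eval 1 -
            9 * q.derivative.eval 1 + 14 * q.eval 1) ∧
    0 < (4 / (27 * (p.eval 1 + q.eval 1))) *
        (2 * (q.eval 1) ^ 2 - 27 * (p.derivative.eval 1 + q.derivative.eval 1) ^ 2 +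
          9 * q.eval 1 *
            (3 * (Polynomial.derivative (Polynomial.derivative p)).eval 1 +
              3 * (Polynomial.derivative (Polynomial.derivative q)).eval 1 +
              3 * q.derivative.eval 1 + 7 * p.derivative.eval 1) +
          p.eval 1 *
            (27 * (Polynomial.derivative (Polynomial.derivative p)).eval 1 +
              27 * p.derivative.eval 1 +
              27 * (Polynomial.derivative (Polynomial.derivative q)).eval 1 -
              9 * q.derivative.eval 1 + 14 * q.eval 1)) := by
  obtain ⟨hP0, hB1, hC1, hcp⟩ := poly_facts p hp
  obtain ⟨hQ0, hB2, hC2, hcq⟩ := poly_facts q hq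
  set P := p.eval 1
  set Q := q.eval 1
  set B1 := p.derivative.eval 1
  set B2 := q.derivative.eval 1
  set C1 := (Polynomial.derivative (Polynomial.derivative p)).eval 1
  set C2 := (Polynomial.derivative (Polynomial.derivative q)).eval 1
  have hE : 0 < 2 * Q ^ 2 - 27 * (B1 + B2) ^ 2 +
      9 * Q * (3 * C1 + 3 * C2 + 3 * B2 + 7 * B1) +
      P * (27 * C1 + 27 * B1 + 27 * C2 - 9 * B2 + 14 * Q) := by
    rcases eq_or_lt_of_le hP0 with hP | hP
    · have hB1z : B1 = 0 := by nlinarith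
      nlinarith
    · have hPQ : 0 < P * Q := mul_pos hP hq1
      nlinarith [mul_pos hPQ hPQ, sq_nonneg (3 * (Q * B1 - P * B2) + 2 * P * Q),
        mul_nonneg (mul_nonneg (add_nonneg hP0 hQ0) hq1.le)
          (sub_nonneg.mpr hcp),
        mul_nonneg (mul_nonneg (add_nonneg hP0 hQ0) hP.le)
          (sub_nonneg.mpr hcq),
        mul_pos (mul_pos hP hq1) (mul_pos hq1 hq1)]
  refine ⟨hE, ?_⟩
  have hden : 0 < (4 : ℝ) / (27 * (P + Q)) := by positivity
  exact mul_pos hden hE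
end

section
/- Let F(x,λ) = λ³ − 20x·λ² + 8(8x² − 3x)·λ + 384x³. Then F(1,λ) = (λ−16)(λ−2(1−√7))(λ−2(1+√7)), so 16 is a root of F(1,·) of multiplicity one whose value strictly exceeds the modulus of every other root. Moreover, if δ > 0 and λ : (1−δ, 1+δ) → ℝ is twice differentiable with λ(1) = 16 and F(x, λ(x)) = 0 for all x ∈ (1−δ, 1+δ), then e := λ′(1)/16 = 6/7 and v := (−λ′(1)² + 16·λ″(1) + 16·λ′(1))/16² = 8/147 > 0. -/
/-! At `x = 1` the cubic is `(λ - 16)(λ² - 4λ - 24)`; any other root `μ` satisfies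
`‖μ‖² = ‖4μ + 24‖ ≤ 4‖μ‖ + 24`, which forces `‖μ‖ < 16`. For a root branch `λ(x)`,
differentiating `F(x, λ(x)) = 0` twice along the graph `t ↦ (t, λ t)` (the chain rule for a
polynomial in two variables) gives at `(1, 16)` the linear equations `168 λ′(1) = 2304` and
`168 λ″(1) + 1280/7 = 0`, from which `e` and `v` are computed. -/

open scoped Topology

namespace MvPolynomial

variable {𝕜 σ : Type*} [NontriviallyNormedField 𝕜]

@[simp]
theorem pderiv_ofNat {R : Type*} [CommSemiring R] (i : σ) (n : ℕ) [n.AtLeastTwo] :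
    pderiv i (ofNat(n) : MvPolynomial σ R) = 0 :=
  (pderiv i).map_natCast n

theorem hasDerivAt_eval_comp [Fintype σ] (p : MvPolynomial σ 𝕜) {γ : 𝕜 → σ → 𝕜} {γ' : σ → 𝕜}
    {x : 𝕜} (hγ : HasDerivAt γ γ' x) :
    HasDerivAt (fun t => eval (γ t) p) (∑ i, eval (γ x) (pderiv i p) * γ' i) x := by
  classical
  induction p using MvPolynomial.induction_on with
  | C a => simpa using hasDerivAt_const x a
  | add p q hp hq => simpa [add_mul, Finset.sum_add_distrib] using hp.fun_add hq
  | mul_X p j hp =>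
    simp only [map_mul, eval_X]
    refine (hp.fun_mul (hasDerivAt_pi.mp hγ j)).congr_deriv ?_
    simp only [Derivation.leibniz, pderiv_X, smul_eq_mul, map_add, map_mul, eval_X, add_mul,
      Finset.sum_add_distrib, Pi.single_apply, apply_ite (eval (γ x)), map_zero, mul_ite,
      mul_one, mul_zero, ite_mul, zero_mul, Finset.sum_ite_eq, Finset.mem_univ, if_true,
      Finset.sum_mul]
    rw [add_comm]
    exact congrArg _ (Finset.sum_congr rfl fun i _ => by ring)

theorem hasDerivAt_eval_graph (p : MvPolynomial (Fin 2) 𝕜) {f : 𝕜 → 𝕜} {f' x : 𝕜}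
    (hf : HasDerivAt f f' x) :
    HasDerivAt (fun t => eval ![t, f t] p)
      (eval ![x, f x] (pderiv 0 p) + eval ![x, f x] (pderiv 1 p) * f') x := by
  have hγ : HasDerivAt (fun t => ![t, f t]) ![1, f'] x :=
    hasDerivAt_pi.mpr (Fin.forall_fin_two.mpr ⟨hasDerivAt_id x, hf⟩)
  simpa [Fin.sum_univ_two] using p.hasDerivAt_eval_comp hγ

end MvPolynomial

theorem HasDerivAt.eq_zero_of_forall_mem_eq_zero {𝕜 : Type*} [NontriviallyNormedField 𝕜]
    {g : 𝕜 → 𝕜} {g' x : 𝕜} {U : Set 𝕜}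
    (hg : HasDerivAt g g' x) (hU : U ∈ 𝓝 x) (h : ∀ t ∈ U, g t = 0) : g' = 0 :=
  hg.unique ((hasDerivAt_const x 0).congr_of_eventuallyEq (Filter.eventually_of_mem hU h))

section ImplicitCurve

open MvPolynomial

variable {𝕜 : Type*} [NontriviallyNormedField 𝕜] {p : MvPolynomial (Fin 2) 𝕜} {f : 𝕜 → 𝕜}
  {U : Set 𝕜} {x : 𝕜}

theorem eval_pderiv_graph_eq_zero (hU : IsOpen U) (hf : ∀ t ∈ U, DifferentiableAt 𝕜 f t)
    (h : ∀ t ∈ U, eval ![t, f t] p = 0) (hx : x ∈ U) :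
    eval ![x, f x] (pderiv 0 p) + eval ![x, f x] (pderiv 1 p) * deriv f x = 0 :=
  (p.hasDerivAt_eval_graph (hf x hx).hasDerivAt).eq_zero_of_forall_mem_eq_zero (hU.mem_nhds hx) h

theorem eval_pderiv_pderiv_graph_eq_zero (hU : IsOpen U) (hf : ∀ t ∈ U, DifferentiableAt 𝕜 f t)
    (h : ∀ t ∈ U, eval ![t, f t] p = 0) (hx : x ∈ U) (hf' : DifferentiableAt 𝕜 (deriv f) x) :
    eval ![x, f x] (pderiv 0 (pderiv 0 p)) + eval ![x, f x] (pderiv 1 (pderiv 0 p)) * deriv f x +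
      ((eval ![x, f x] (pderiv 0 (pderiv 1 p)) + eval ![x, f x] (pderiv 1 (pderiv 1 p)) * deriv f x) *
        deriv f x + eval ![x, f x] (pderiv 1 p) * deriv (deriv f) x) = 0 := by
  have hfx := (hf x hx).hasDerivAt
  exact (((pderiv 0 p).hasDerivAt_eval_graph hfx).fun_add
    (((pderiv 1 p).hasDerivAt_eval_graph hfx).fun_mul hf'.hasDerivAt)).eq_zero_of_forall_mem_eq_zero
    (hU.mem_nhds hx) fun t ht => eval_pderiv_graph_eq_zero hU hf h ht

end ImplicitCurve

open MvPolynomial in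
noncomputable def clawCharPoly : MvPolynomial (Fin 2) ℝ :=
  X 1 ^ 3 - 20 * X 0 * X 1 ^ 2 + 8 * (8 * X 0 ^ 2 - 3 * X 0) * X 1 + 384 * X 0 ^ 3

open MvPolynomial in
theorem eval_clawCharPoly (x l : ℝ) : eval ![x, l] clawCharPoly =
    l ^ 3 - 20 * x * l ^ 2 + 8 * (8 * x ^ 2 - 3 * x) * l + 384 * x ^ 3 := by
  simp [clawCharPoly]

theorem claw_root_derivs_at_one {lam : ℝ → ℝ} {U : Set ℝ} (hU : IsOpen U) (h1 : (1 : ℝ) ∈ U)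
    (hd : ∀ x ∈ U, DifferentiableAt ℝ lam x) (hd' : DifferentiableAt ℝ (deriv lam) 1)
    (h16 : lam 1 = 16) (hroot : ∀ x ∈ U, MvPolynomial.eval ![x, lam x] clawCharPoly = 0) :
    deriv lam 1 = 96 / 7 ∧ deriv (deriv lam) 1 = -160 / 147 := by
  have e1 := eval_pderiv_graph_eq_zero hU hd hroot h1
  have e2 := eval_pderiv_pderiv_graph_eq_zero hU hd hroot h1 hd'
  norm_num [clawCharPoly, MvPolynomial.pderiv_X, h16] at e1 e2
  have h' : deriv lam 1 = 96 / 7 := by linarith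
  rw [h'] at e2
  exact ⟨h', by linarith⟩

open Polynomial Set

theorem rootMultiplicity_X_sub_C_mul_eq_one {R : Type*} [CommRing R] [IsDomain R] {a : R}
    {q : R[X]} (hq : ¬ q.IsRoot a) : ((X - C a) * q).rootMultiplicity a = 1 := by
  have hq0 : q ≠ 0 := fun h => hq (by simp [h])
  rw [mul_comm, ← pow_one (X - C a), rootMultiplicity_mul_X_sub_C_pow hq0,
    rootMultiplicity_eq_zero hq]

theorem claw_cubic_factor :
    (X ^ 3 - C 20 * X ^ 2 + C 40 * X + C 384 : ℂ[X]) = (X - C 16) * (X ^ 2 - C 4 * X - C 24) := by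
  simp only [map_ofNat]
  ring

theorem norm_lt_sixteen_of_claw_cubic_root {μ : ℂ}
    (hμ : (X ^ 3 - C 20 * X ^ 2 + C 40 * X + C 384 : ℂ[X]).eval μ = 0) (hne : μ ≠ 16) :
    ‖μ‖ < 16 := by
  rw [claw_cubic_factor] at hμ
  simp only [eval_mul, eval_sub, eval_pow, eval_X, eval_C] at hμ
  have hq : μ ^ 2 = 4 * μ + 24 := by
    linear_combination (mul_eq_zero.mp hμ).resolve_left (sub_ne_zero.mpr hne)
  have hnorm : ‖μ‖ ^ 2 ≤ 4 * ‖μ‖ + 24 :=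
    calc ‖μ‖ ^ 2 = ‖4 * μ + 24‖ := by rw [← norm_pow, hq]
      _ ≤ ‖4 * μ‖ + ‖(24 : ℂ)‖ := norm_add_le _ _
      _ = 4 * ‖μ‖ + 24 := by simp
  nlinarith [norm_nonneg μ]

theorem iterated_claw_genus_parameters
    (F : ℝ → ℝ → ℝ)
    (hF : ∀ x l : ℝ, F x l = l ^ 3 - 20 * x * l ^ 2 + 8 * (8 * x ^ 2 - 3 * x) * l + 384 * x ^ 3)
    (Q : Polynomial ℂ)
    (hQ : Q = X ^ 3 - Polynomial.C 20 * X ^ 2 + Polynomial.C 40 * X + Polynomial.C 384) :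
    (∀ l : ℝ, F 1 l =
      (l - 16) * (l - 2 * (1 - Real.sqrt 7)) * (l - 2 * (1 + Real.sqrt 7))) ∧
    Q.rootMultiplicity 16 = 1 ∧
    (∀ μ : ℂ, Q.eval μ = 0 → μ ≠ 16 → ‖μ‖ < 16) ∧
    (∀ (δ : ℝ), 0 < δ → ∀ lam : ℝ → ℝ,
      (∀ x ∈ Set.Ioo (1 - δ) (1 + δ), DifferentiableAt ℝ lam x) →
      (∀ x ∈ Set.Ioo (1 - δ) (1 + δ), DifferentiableAt ℝ (deriv lam) x) →
      lam 1 = 16 →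
      (∀ x ∈ Set.Ioo (1 - δ) (1 + δ), F x (lam x) = 0) →
      deriv lam 1 / 16 = 6 / 7 ∧
      (-(deriv lam 1) ^ 2 + 16 * deriv (deriv lam) 1 + 16 * deriv lam 1) / 16 ^ 2 = 8 / 147 ∧
      0 < (8 : ℝ) / 147) := by
  subst hQ
  refine ⟨fun l => ?_, ?_, fun μ => norm_lt_sixteen_of_claw_cubic_root,
    fun δ hδ lam hd hd' h16 hroot => ?_⟩
  · rw [hF]
    linear_combination 4 * (l - 16) * Real.sq_sqrt (show (0 : ℝ) ≤ 7 by norm_num)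
  · rw [claw_cubic_factor]
    exact rootMultiplicity_X_sub_C_mul_eq_one (by norm_num)
  · have h1 : (1 : ℝ) ∈ Ioo (1 - δ) (1 + δ) := ⟨by linarith, by linarith⟩
    obtain ⟨h', h''⟩ := claw_root_derivs_at_one isOpen_Ioo h1 hd (hd' 1 h1) h16 fun x hx => by
      rw [eval_clawCharPoly, ← hF]
      exact hroot x hx
    rw [h', h'']
    norm_num
end

section
/- Let F(x,λ) = λ⁷ − 4λ⁶ − (20x−5)λ⁵ − (2−56x)λ⁴ + 4(32x−11)x·λ³ − 8(28x−1)x·λ² − 32(8x−3)x²·λ + 256x³, and define λ₁(x) := 1 + √(1+8x) for x ≥ 0. Then F(x, λ₁(x)) = 0 for all x ≥ 0; in particular D := λ₁(1) = 4 is a root of F(1,·) strictly exceeding the modulus of every other complex root of F(1,·). Moreover e := λ₁′(1)/D = 1/3 and v := (−λ₁′(1)² + D·λ₁″(1) + D·λ₁′(1))/D² = 2/27 > 0. -/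
/-!
Over any commutative ring the characteristic polynomial factors as
`(λ - 1)(λ² - 4x)((λ - 1)² - (1 + 8x))(λ² - λ - 8x)`, so `1 + √(1 + 8x)` kills the third
factor. At `x = 1` the roots other than `4` are `1`, `±2` and the roots of `μ² = μ + 8`; the
latter lie in the disc of radius `4` because `‖μ‖² > ‖μ‖ + 8` as soon as `‖μ‖ ≥ 4`.
The parameters `e` and `v` come from `λ₁′ = 4 / √(1 + 8x)` and `λ₁″ = -16 / √(1 + 8x)³`.
-/

def ladderCharPoly {R : Type*} [CommRing R] (x l : R) : R :=
  l ^ 7 - 4 * l ^ 6 - (20 * x - 5) * l ^ 5 - (2 - 56 * x) * l ^ 4 + 4 * (32 * x - 11) * x * l ^ 3 -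
    8 * (28 * x - 1) * x * l ^ 2 - 32 * (8 * x - 3) * x ^ 2 * l + 256 * x ^ 3

section CharPoly

variable {R : Type*} [CommRing R]

theorem ladderCharPoly_eq_mul (x l : R) :
    ladderCharPoly x l =
      (l - 1) * (l ^ 2 - 4 * x) * ((l - 1) ^ 2 - (1 + 8 * x)) * (l ^ 2 - l - 8 * x) := by
  unfold ladderCharPoly
  ring

theorem ladderCharPoly_one_add_eq_zero {x s : R} (hs : s ^ 2 = 1 + 8 * x) :
    ladderCharPoly x (1 + s) = 0 := by
  rw [ladderCharPoly_eq_mul, add_sub_cancel_left, hs, sub_self, mul_zero, zero_mul]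

theorem ladderCharPoly_one_eq_mul (l : R) :
    ladderCharPoly 1 l = (l - 4) * ((l - 1) * (l ^ 2 - 4) * (l + 2) * (l ^ 2 - (l + 8))) := by
  rw [ladderCharPoly_eq_mul]
  ring

end CharPoly

theorem Complex.norm_lt_four_of_sq_eq_add_eight {μ : ℂ} (h : μ ^ 2 = μ + 8) : ‖μ‖ < 4 := by
  by_contra! h4
  have hgrowth : ‖μ‖ + 8 < ‖μ‖ ^ 2 := by nlinarith
  have htriangle : ‖μ + 8‖ ≤ ‖μ‖ + 8 := by simpa using norm_add_le μ 8
  rw [← h, norm_pow] at htriangle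
  linarith

theorem norm_lt_four_of_ladderCharPoly_one_eq_zero {μ : ℂ} (hμ : ladderCharPoly 1 μ = 0)
    (h4 : μ ≠ 4) : ‖μ‖ < 4 := by
  simp only [ladderCharPoly_one_eq_mul, mul_eq_zero, sub_eq_zero] at hμ
  rcases hμ.resolve_left h4 with (((rfl | hsq) | hneg) | hquad)
  · norm_num
  · have : ‖μ‖ ^ 2 = 2 ^ 2 := by rw [← norm_pow, hsq]; norm_num
    nlinarith [norm_nonneg μ]
  · norm_num [eq_neg_of_add_eq_zero_left hneg]
  · exact Complex.norm_lt_four_of_sq_eq_add_eight hquad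

noncomputable def ladderRoot (x : ℝ) : ℝ := 1 + √(1 + 8 * x)

theorem ladderCharPoly_ladderRoot {x : ℝ} (hx : 0 ≤ 1 + 8 * x) :
    ladderCharPoly x (ladderRoot x) = 0 :=
  ladderCharPoly_one_add_eq_zero (Real.sq_sqrt hx)

theorem sqrt_one_add_eight_mul_one : √(1 + 8 * 1 : ℝ) = 3 := by
  rw [show (1 + 8 * 1 : ℝ) = 3 ^ 2 by norm_num, Real.sqrt_sq zero_le_three]

theorem ladderRoot_one : ladderRoot 1 = 4 := by
  rw [ladderRoot, sqrt_one_add_eight_mul_one]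
  norm_num

section Derivatives

variable {y : ℝ}

theorem hasDerivAt_sqrt_one_add_eight_mul (hy : 0 < 1 + 8 * y) :
    HasDerivAt (fun x => √(1 + 8 * x)) (4 / √(1 + 8 * y)) y := by
  have hlin : HasDerivAt (fun x : ℝ => 1 + 8 * x) 8 y := by
    simpa using ((hasDerivAt_id y).const_mul (8 : ℝ)).const_add 1
  refine (hlin.sqrt hy.ne').congr_deriv ?_
  field_simp
  norm_num

theorem hasDerivAt_ladderRoot (hy : 0 < 1 + 8 * y) :
    HasDerivAt ladderRoot (4 / √(1 + 8 * y)) y :=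
  (hasDerivAt_sqrt_one_add_eight_mul hy).const_add 1

theorem hasDerivAt_four_div_sqrt_one_add_eight_mul (hy : 0 < 1 + 8 * y) :
    HasDerivAt (fun x => 4 / √(1 + 8 * x)) (-16 / √(1 + 8 * y) ^ 3) y := by
  have hsqrt := Real.sqrt_pos.mpr hy
  refine ((hasDerivAt_const y (4 : ℝ)).fun_div (hasDerivAt_sqrt_one_add_eight_mul hy)
    hsqrt.ne').congr_deriv ?_
  field_simp
  ring

theorem deriv_ladderRoot_eventuallyEq : deriv ladderRoot =ᶠ[nhds 1] fun x => 4 / √(1 + 8 * x) := by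
  filter_upwards [eventually_gt_nhds (show (-1 / 8 : ℝ) < 1 by norm_num)] with y hy
  exact (hasDerivAt_ladderRoot (by linarith)).deriv

end Derivatives

theorem deriv_ladderRoot_one : deriv ladderRoot 1 = 4 / 3 := by
  rw [(hasDerivAt_ladderRoot (by norm_num)).deriv, sqrt_one_add_eight_mul_one]

theorem deriv_deriv_ladderRoot_one : deriv (deriv ladderRoot) 1 = -16 / 27 := by
  rw [deriv_ladderRoot_eventuallyEq.deriv_eq,
    (hasDerivAt_four_div_sqrt_one_add_eight_mul (by norm_num)).deriv, sqrt_one_add_eight_mul_one]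
  norm_num

theorem ladders_genus_parameters
    (F : ℝ → ℝ → ℝ)
    (hF : ∀ x l : ℝ, F x l = l ^ 7 - 4 * l ^ 6 - (20 * x - 5) * l ^ 5 -
      (2 - 56 * x) * l ^ 4 + 4 * (32 * x - 11) * x * l ^ 3 -
      8 * (28 * x - 1) * x * l ^ 2 - 32 * (8 * x - 3) * x ^ 2 * l + 256 * x ^ 3)
    (Fc : ℂ → ℂ)
    (hFc : ∀ l : ℂ, Fc l = l ^ 7 - 4 * l ^ 6 - (20 - 5) * l ^ 5 -
      (2 - 56) * l ^ 4 + 4 * (32 - 11) * l ^ 3 -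
      8 * (28 - 1) * l ^ 2 - 32 * (8 - 3) * l + 256)
    (lam : ℝ → ℝ)
    (hlam : ∀ x : ℝ, lam x = 1 + Real.sqrt (1 + 8 * x)) :
    (∀ x : ℝ, 0 ≤ x → F x (lam x) = 0) ∧
    lam 1 = 4 ∧
    (∀ μ : ℂ, Fc μ = 0 → μ ≠ 4 → ‖μ‖ < 4) ∧
    deriv lam 1 / 4 = 1 / 3 ∧
    (-(deriv lam 1) ^ 2 + 4 * deriv (deriv lam) 1 + 4 * deriv lam 1) / 4 ^ 2 = 2 / 27 ∧
    0 < (2 : ℝ) / 27 := by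
  obtain rfl : lam = ladderRoot := funext hlam
  have hFc_one (μ : ℂ) : Fc μ = ladderCharPoly 1 μ := by
    rw [hFc, ladderCharPoly]
    ring
  refine ⟨fun x hx => (hF x _).trans (ladderCharPoly_ladderRoot (by linarith)), ladderRoot_one,
    fun μ hμ h4 => norm_lt_four_of_ladderCharPoly_one_eq_zero (hFc_one μ ▸ hμ) h4,
    ?_, ?_, by norm_num⟩
  · rw [deriv_ladderRoot_one]
    norm_num
  · rw [deriv_ladderRoot_one, deriv_deriv_ladderRoot_one]
    norm_num
end
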